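/- arXiv:2408.13133 — 4 statements merged into one kernel-verified Lean document; each statement's English description precedes it below -/
import Mathlib

section
/- For all θ, θ′ ∈ (0, π) with θ ≠ θ′, the partial sums Σ_{n=1}^K (2/n) cos(nθ) cos(nθ′) converge as K → ∞, and their limit equals −log( |e^{iθ} − e^{iθ′}| · |e^{iθ} − e^{−iθ′}| ). -/
/-!
Since `2 cos a cos b = cos (a - b) + cos (a + b)`, the series splits into two series
`∑ cos (n x) / n` with `x = θ - θ'` and `x = θ + θ'`, neither a multiple of `2π`. For
`z = e^{ix} ≠ 1` on the unit circle, `∑ zⁿ / n` converges by Dirichlet's test (the geometric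
partial sums are bounded by `2 / ‖1 - z‖`), and Abel's limit theorem identifies its sum with the
radial limit of `-log (1 - r z)` as `r → 1⁻`, i.e. `-log (1 - z)`. Taking real parts gives
`∑ cos (n x) / n = -log ‖1 - e^{ix}‖`, and `‖e^{iθ} - e^{iθ'}‖ = ‖1 - e^{i(θ - θ')}‖`.
-/

open Filter Finset Complex Topology

theorem norm_sum_range_pow_succ_le {𝕜 : Type*} [NormedDivisionRing 𝕜] {z : 𝕜} (hz : ‖z‖ ≤ 1)
    (hz1 : z ≠ 1) (n : ℕ) : ‖∑ i ∈ range n, z ^ (i + 1)‖ ≤ 2 / ‖1 - z‖ := by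
  have hgeom : ∑ i ∈ range n, z ^ (i + 1) = z * ((z ^ n - 1) / (z - 1)) := by
    simp only [← geom_sum_eq hz1, mul_sum, pow_succ']
  have hpow : ‖z ^ n - 1‖ ≤ 2 :=
    calc ‖z ^ n - 1‖ ≤ ‖z‖ ^ n + 1 := by simpa [norm_pow] using norm_sub_le (z ^ n) 1
      _ ≤ 2 := by linarith [pow_le_one₀ (norm_nonneg z) hz (n := n)]
  rw [hgeom, norm_mul, norm_div, norm_sub_rev z 1]
  calc ‖z‖ * (‖z ^ n - 1‖ / ‖1 - z‖) ≤ 1 * (2 / ‖1 - z‖) := by gcongr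
    _ = 2 / ‖1 - z‖ := one_mul _

theorem cauchySeq_sum_pow_succ_div {z : ℂ} (hz : ‖z‖ ≤ 1) (hz1 : z ≠ 1) :
    CauchySeq fun K ↦ ∑ n ∈ range K, z ^ (n + 1) / (n + 1) := by
  have hdirichlet := Antitone.cauchySeq_series_mul_of_tendsto_zero_of_bounded
    (f := fun n : ℕ ↦ 1 / ((n : ℝ) + 1)) (fun _ _ h ↦ Nat.one_div_le_one_div h)
    tendsto_one_div_add_atTop_nhds_zero_nat (norm_sum_range_pow_succ_le hz hz1)
  convert hdirichlet using 3 with K n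
  rw [real_smul]
  push_cast
  ring

theorem one_sub_mem_slitPlane {z : ℂ} (hz : ‖z‖ ≤ 1) (hz1 : z ≠ 1) : 1 - z ∈ slitPlane := by
  rw [mem_slitPlane_iff, sub_re, one_re, sub_im, one_im, zero_sub, neg_ne_zero]
  by_cases him : z.im = 0
  · left
    have hre : |z.re| ≤ 1 := (abs_re_eq_norm.mpr him).trans_le hz
    have hre1 : z.re ≠ 1 := fun h ↦ hz1 (Complex.ext h him)
    linarith [lt_of_le_of_ne (abs_le.mp hre).2 hre1]
  · exact Or.inr him

theorem mul_tsum_pow_succ_div_mul_pow {w z : ℂ} (h : ‖w * z‖ < 1) :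
    w * ∑' n : ℕ, z ^ (n + 1) / (n + 1) * w ^ n = -log (1 - w * z) := by
  rw [← (hasSum_taylorSeries_neg_log' h).tsum_eq, ← tsum_mul_left]
  congr 1 with n
  ring

theorem tendsto_sum_pow_succ_div {z : ℂ} (hz : ‖z‖ ≤ 1) (hz1 : z ≠ 1) :
    Tendsto (fun K ↦ ∑ n ∈ range K, z ^ (n + 1) / (n + 1)) atTop (𝓝 (-log (1 - z))) := by
  obtain ⟨l, hl⟩ := cauchySeq_tendsto_of_complete (cauchySeq_sum_pow_succ_div hz hz1)
  set L := (𝓝[<] (1 : ℝ)).map ofReal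
  have hL : L ≤ 𝓝 1 := by
    rw [← ofReal_one]
    exact (continuous_ofReal.tendsto 1).mono_left nhdsWithin_le_nhds
  have habel : Tendsto (fun w ↦ w * ∑' n : ℕ, z ^ (n + 1) / (n + 1) * w ^ n) L (𝓝 l) := by
    simpa using (tendsto_id.mono_left hL).mul (tendsto_tsum_powerSeries_nhdsWithin_lt hl)
  have hlog : Tendsto (fun w ↦ -log (1 - w * z)) L (𝓝 (-log (1 - z))) := by
    have hcont : ContinuousAt (fun w ↦ -log (1 - w * z)) 1 :=
      (ContinuousAt.clog (by fun_prop) (by simpa using one_sub_mem_slitPlane hz hz1)).neg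
    simpa using hcont.tendsto.mono_left hL
  have heq : ∀ᶠ w in L, w * ∑' n : ℕ, z ^ (n + 1) / (n + 1) * w ^ n = -log (1 - w * z) := by
    refine eventually_map.mpr ?_
    filter_upwards [Ioo_mem_nhdsLT zero_lt_one] with r ⟨hr0, hr1⟩
    refine mul_tsum_pow_succ_div_mul_pow ?_
    rw [norm_mul, norm_real, Real.norm_of_nonneg hr0.le]
    nlinarith [norm_nonneg z]
  rwa [tendsto_nhds_unique (habel.congr' heq) hlog] at hl

theorem exp_ofReal_mul_I_ne_one {x : ℝ} (h0 : x ≠ 0) (h2 : |x| < 2 * Real.pi) :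
    exp (x * I) ≠ 1 := by
  rw [Ne, exp_eq_one_iff]
  rintro ⟨n, hn⟩
  have hx : x = n * (2 * Real.pi) := by simpa using congrArg im hn
  have hn1 : |(n : ℝ)| < 1 := by
    rw [hx, abs_mul, abs_of_pos Real.two_pi_pos] at h2
    exact (mul_lt_iff_lt_one_left Real.two_pi_pos).mp h2
  have hn0 : n = 0 := Int.abs_lt_one_iff.mp (by exact_mod_cast hn1)
  exact h0 (by simpa [hn0] using hx)

theorem tendsto_sum_cos_mul_div {x : ℝ} (hx : exp (x * I) ≠ 1) :
    Tendsto (fun K ↦ ∑ n ∈ range K, Real.cos ((n + 1) * x) / (n + 1)) atTop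
      (𝓝 (-Real.log ‖1 - exp (x * I)‖)) := by
  have h := (continuous_re.tendsto _).comp
    (tendsto_sum_pow_succ_div (norm_exp_ofReal_mul_I x).le hx)
  rw [neg_re, log_re] at h
  refine h.congr fun K ↦ ?_
  simp only [Function.comp_apply, re_sum]
  refine sum_congr rfl fun n _ ↦ ?_
  have hpow : exp (x * I) ^ (n + 1) = exp (((n + 1) * x : ℝ) * I) := by
    rw [← exp_nat_mul]; push_cast; ring_nf
  have hcast : (n : ℂ) + 1 = ((n + 1 : ℝ) : ℂ) := by push_cast; rfl
  rw [hpow, hcast, div_ofReal_re, exp_ofReal_mul_I_re]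

theorem norm_exp_mul_I_sub_exp_mul_I (a b : ℝ) :
    ‖exp (a * I) - exp (b * I)‖ = ‖1 - exp ((a - b : ℝ) * I)‖ := by
  have hfactor : exp (a * I) - exp (b * I) = exp (b * I) * (exp ((a - b : ℝ) * I) - 1) := by
    rw [mul_sub, ← exp_add, mul_one]; push_cast; ring_nf
  rw [hfactor, norm_mul, norm_exp_ofReal_mul_I, one_mul, norm_sub_rev]

/-- Covariance Fourier identity for the Gaussian field on the half-circle:
`Σ_{n≥1} (2/n) cos(nθ) cos(nθ′) = −log(|e^{iθ}−e^{iθ′}|·|e^{iθ}−e^{−iθ′}|)`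
for `θ ≠ θ′` in `(0, π)`, as a limit of partial sums. -/
theorem halfCircle_covariance_series (θ θ' : ℝ)
    (hθ : θ ∈ Set.Ioo 0 Real.pi) (hθ' : θ' ∈ Set.Ioo 0 Real.pi) (hne : θ ≠ θ') :
    Filter.Tendsto
      (fun K : ℕ => ∑ n ∈ Finset.range K,
        (2 / ((n : ℝ) + 1)) * Real.cos (((n : ℝ) + 1) * θ) * Real.cos (((n : ℝ) + 1) * θ'))
      Filter.atTop
      (nhds (- Real.log
        (‖Complex.exp (θ * Complex.I) - Complex.exp (θ' * Complex.I)‖ *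
         ‖Complex.exp (θ * Complex.I) - Complex.exp (-θ' * Complex.I)‖))) := by
  obtain ⟨hθ0, hθπ⟩ := hθ
  obtain ⟨hθ'0, hθ'π⟩ := hθ'
  have hdiff : exp ((θ - θ' : ℝ) * I) ≠ 1 :=
    exp_ofReal_mul_I_ne_one (sub_ne_zero.mpr hne) (abs_lt.mpr ⟨by linarith, by linarith⟩)
  have hsum : exp ((θ + θ' : ℝ) * I) ≠ 1 :=
    exp_ofReal_mul_I_ne_one (by linarith) (abs_lt.mpr ⟨by linarith, by linarith⟩)
  rw [norm_exp_mul_I_sub_exp_mul_I, ← ofReal_neg, norm_exp_mul_I_sub_exp_mul_I, sub_neg_eq_add,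
    Real.log_mul (norm_ne_zero_iff.mpr (sub_ne_zero.mpr hdiff.symm))
      (norm_ne_zero_iff.mpr (sub_ne_zero.mpr hsum.symm)), neg_add]
  refine ((tendsto_sum_cos_mul_div hdiff).add (tendsto_sum_cos_mul_div hsum)).congr fun K ↦ ?_
  rw [← sum_add_distrib]
  refine sum_congr rfl fun n _ ↦ ?_
  rw [mul_sub, mul_add, Real.cos_sub, Real.cos_add]
  ring
end

section
/- Let D = {z ∈ ℂ : |z| < 1} be the open unit disk and let σ : D → D be an antiholomorphic involution, i.e. σ is a bijection of D onto itself, σ(σ(z)) = z for all z ∈ D, and the map z ↦ conj(σ(z)) is holomorphic on D. Then there exist a ∈ ℂ with |a| < 1 and θ ∈ ℝ such that the Möbius automorphism H(z) = e^{iθ}(z − a)/(1 − conj(a)·z) of D satisfies H(σ(z)) = conj(H(z)) for all z ∈ D; that is, every antiholomorphic involution of the unit disk is conjugate to complex conjugation by a holomorphic automorphism of the disk. -/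
/-!
Put `τ = conj ∘ σ`. It is a holomorphic self-map of the disk with the holomorphic left inverse
`σ ∘ conj`, so the Schwarz lemma (with its equality case) makes it a Möbius map
`τ = l · φ_b`, `φ_b z = (z - b) / (1 - b̄ z)`, where `b = σ 0`. An anti-Möbius involution of
this form fixes the hyperbolic midpoint `a` of `0` and `b`. Conjugating `σ` by `φ_a` gives an
antiholomorphic involution fixing `0`, which by the same argument is `w ↦ conj (k w)` with
`|k| = 1`; writing `k = e^{2iθ}`, the automorphism `e^{iθ} φ_a` conjugates `σ` to `conj`.
-/

open Complex ComplexConjugate Metric Set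

noncomputable def diskMobius (a z : ℂ) : ℂ := (z - a) / (1 - conj a * z)

section diskMobius

variable {a z : ℂ}

@[simp] theorem diskMobius_self (a : ℂ) : diskMobius a a = 0 := by simp [diskMobius]

@[simp] theorem diskMobius_zero_left (z : ℂ) : diskMobius 0 z = z := by simp [diskMobius]

@[simp] theorem diskMobius_zero_right (a : ℂ) : diskMobius a 0 = -a := by simp [diskMobius]

theorem conj_diskMobius (a z : ℂ) : conj (diskMobius a z) = diskMobius (conj a) (conj z) := by
  simp [diskMobius, map_div₀]

theorem one_sub_conj_mul_ne_zero (ha : ‖a‖ < 1) (hz : ‖z‖ < 1) : 1 - conj a * z ≠ 0 := by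
  refine sub_ne_zero.mpr fun h => ?_
  have : ‖conj a * z‖ < 1 := by
    rw [norm_mul, norm_conj]
    exact mul_lt_one_of_nonneg_of_lt_one_left (norm_nonneg a) ha hz.le
  simp [← h] at this

theorem normSq_one_sub_conj_mul_sub_normSq_sub (a z : ℂ) :
    normSq (1 - conj a * z) - normSq (z - a) = (1 - normSq a) * (1 - normSq z) := by
  simp only [normSq_apply, sub_re, sub_im, mul_re, mul_im, one_re, one_im, conj_re, conj_im]
  ring

theorem norm_diskMobius_lt_one (ha : ‖a‖ < 1) (hz : ‖z‖ < 1) : ‖diskMobius a z‖ < 1 := by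
  have hden := norm_pos_iff.mpr (one_sub_conj_mul_ne_zero ha hz)
  have hsq (w : ℂ) (hw : ‖w‖ < 1) : normSq w < 1 := by
    rw [normSq_eq_norm_sq]
    exact pow_lt_one₀ (norm_nonneg w) hw two_ne_zero
  have hnormSq : normSq (z - a) < normSq (1 - conj a * z) := by
    nlinarith [normSq_one_sub_conj_mul_sub_normSq_sub a z, hsq a ha, hsq z hz]
  rw [diskMobius, norm_div, div_lt_one hden]
  rw [normSq_eq_norm_sq, normSq_eq_norm_sq] at hnormSq
  exact (sq_lt_sq₀ (norm_nonneg _) hden.le).mp hnormSq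

theorem diskMobius_neg_diskMobius (ha : ‖a‖ < 1) (hz : ‖z‖ < 1) :
    diskMobius (-a) (diskMobius a z) = z := by
  have hz' := one_sub_conj_mul_ne_zero ha hz
  have ha' := one_sub_conj_mul_ne_zero ha ha
  have hnum : diskMobius a z + a = z * (1 - conj a * a) / (1 - conj a * z) := by
    rw [diskMobius, eq_div_iff hz', add_mul, div_mul_cancel₀ _ hz']
    ring
  have hden : 1 + conj a * diskMobius a z = (1 - conj a * a) / (1 - conj a * z) := by
    rw [diskMobius, eq_div_iff hz', add_mul, mul_assoc, div_mul_cancel₀ _ hz']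
    ring
  rw [diskMobius, map_neg, sub_neg_eq_add, neg_mul, sub_neg_eq_add, hnum, hden]
  rw [div_div_div_cancel_right₀ hz', mul_div_cancel_right₀ z ha']

theorem diskMobius_diskMobius_neg (ha : ‖a‖ < 1) (hz : ‖z‖ < 1) :
    diskMobius a (diskMobius (-a) z) = z := by
  simpa using diskMobius_neg_diskMobius (a := -a) (by rwa [norm_neg]) hz

theorem mapsTo_diskMobius (ha : ‖a‖ < 1) : MapsTo (diskMobius a) (ball 0 1) (ball 0 1) :=
  fun _ hz => mem_ball_zero_iff.mpr (norm_diskMobius_lt_one ha (mem_ball_zero_iff.mp hz))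

theorem differentiableOn_diskMobius (ha : ‖a‖ < 1) :
    DifferentiableOn ℂ (diskMobius a) (ball 0 1) :=
  DifferentiableOn.div (by fun_prop) (by fun_prop) fun _ hz =>
    one_sub_conj_mul_ne_zero ha (mem_ball_zero_iff.mp hz)

end diskMobius

theorem exists_eq_mul_of_leftInverse {f g : ℂ → ℂ}
    (hf : DifferentiableOn ℂ f (ball 0 1)) (hfD : MapsTo f (ball 0 1) (ball 0 1))
    (hg : DifferentiableOn ℂ g (ball 0 1)) (hgD : MapsTo g (ball 0 1) (ball 0 1))
    (hgf : ∀ z ∈ ball (0 : ℂ) 1, g (f z) = z) (hf₀ : f 0 = 0) :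
    ∃ l : ℂ, ‖l‖ = 1 ∧ ∀ z ∈ ball (0 : ℂ) 1, f z = l * z := by
  have hg₀ : g 0 = 0 := by simpa [hf₀] using hgf 0 (mem_ball_self one_pos)
  have hnorm : ∀ z ∈ ball (0 : ℂ) 1, ‖f z‖ = ‖z‖ := fun z hz => by
    rw [mem_ball_zero_iff] at hz
    refine le_antisymm
      (norm_le_norm_of_mapsTo_ball hf (hfD.mono_right ball_subset_closedBall) hf₀ hz) ?_
    calc ‖z‖ = ‖g (f z)‖ := by rw [hgf z (mem_ball_zero_iff.mpr hz)]
      _ ≤ ‖f z‖ :=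
        norm_le_norm_of_mapsTo_ball hg (hgD.mono_right ball_subset_closedBall) hg₀
          (mem_ball_zero_iff.mp (hfD (mem_ball_zero_iff.mpr hz)))
  -- equality in the Schwarz lemma at a single point forces `f` to be linear
  have hhalf : (2⁻¹ : ℂ) ∈ ball (0 : ℂ) 1 := by rw [mem_ball_zero_iff]; norm_num
  have hslope : ‖dslope f 0 2⁻¹‖ = 1 / 1 := by
    rw [dslope_of_ne _ (by norm_num), slope_def_field, hf₀, sub_zero, sub_zero, norm_div,
      hnorm _ hhalf, div_self (by norm_num)]
    norm_num
  obtain ⟨l, hl, hfl⟩ := affine_of_mapsTo_ball_of_exists_norm_dslope_eq_div' hf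
    (by rw [hf₀]; exact hfD.mono_right ball_subset_closedBall) ⟨2⁻¹, hhalf, hslope⟩
  exact ⟨l, by simpa using hl, fun z hz => by simpa [hf₀, mul_comm] using hfl hz⟩

theorem exists_eq_mul_diskMobius_of_leftInverse {f g : ℂ → ℂ} {b : ℂ}
    (hf : DifferentiableOn ℂ f (ball 0 1)) (hfD : MapsTo f (ball 0 1) (ball 0 1))
    (hg : DifferentiableOn ℂ g (ball 0 1)) (hgD : MapsTo g (ball 0 1) (ball 0 1))
    (hgf : ∀ z ∈ ball (0 : ℂ) 1, g (f z) = z) (hb : ‖b‖ < 1) (hfb : f b = 0) :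
    ∃ l : ℂ, ‖l‖ = 1 ∧ ∀ z ∈ ball (0 : ℂ) 1, f z = l * diskMobius b z := by
  have hb' : ‖-b‖ < 1 := by rwa [norm_neg]
  obtain ⟨l, hl, hfl⟩ := exists_eq_mul_of_leftInverse (f := f ∘ diskMobius (-b))
    (g := diskMobius b ∘ g) (hf.comp (differentiableOn_diskMobius hb') (mapsTo_diskMobius hb'))
    (hfD.comp (mapsTo_diskMobius hb')) ((differentiableOn_diskMobius hb).comp hg hgD)
    ((mapsTo_diskMobius hb).comp hgD)
    (fun w hw => by
      simp only [Function.comp_apply]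
      rw [hgf _ (mapsTo_diskMobius hb' hw),
        diskMobius_diskMobius_neg hb (mem_ball_zero_iff.mp hw)])
    (by simp [hfb])
  refine ⟨l, hl, fun z hz => ?_⟩
  simpa [diskMobius_neg_diskMobius hb (mem_ball_zero_iff.mp hz)] using
    hfl _ (mapsTo_diskMobius hb hz)

theorem mapsTo_conj_ball (r : ℝ) : MapsTo conj (ball (0 : ℂ) r) (ball 0 r) :=
  fun z hz => by simpa using hz

theorem DifferentiableOn.conj_conj {f : ℂ → ℂ} {s : Set ℂ} (hf : DifferentiableOn ℂ f s)
    (hs : IsOpen s) (hconj : MapsTo conj s s) : DifferentiableOn ℂ (conj ∘ f ∘ conj) s := by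
  intro z hz
  have := (hf.differentiableAt (hs.mem_nhds (hconj hz))).conj_conj
  rw [Complex.conj_conj] at this
  exact this.differentiableWithinAt

/-- The hyperbolic midpoint of `0` and `b`. -/
noncomputable def diskMidpoint (b : ℂ) : ℂ := b / ((1 + √(1 - ‖b‖ ^ 2) : ℝ) : ℂ)

theorem norm_diskMidpoint_lt_one {b : ℂ} (hb : ‖b‖ < 1) : ‖diskMidpoint b‖ < 1 := by
  have hr : 0 ≤ √(1 - ‖b‖ ^ 2) := Real.sqrt_nonneg _
  rw [diskMidpoint, norm_div, norm_real, Real.norm_of_nonneg (by positivity)]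
  calc ‖b‖ / (1 + √(1 - ‖b‖ ^ 2)) ≤ ‖b‖ / 1 := by gcongr; linarith
    _ < 1 := by rwa [div_one]

theorem mul_diskMobius_diskMidpoint {l b : ℂ} (hb : ‖b‖ < 1) (hlb : conj b = -(l * b)) :
    l * diskMobius b (diskMidpoint b) = conj (diskMidpoint b) := by
  have hr : ((√(1 - ‖b‖ ^ 2) : ℝ) : ℂ) ^ 2 = 1 - (‖b‖ : ℂ) ^ 2 := by
    exact_mod_cast Real.sq_sqrt (by nlinarith [norm_nonneg b])
  have hμ : ((1 + √(1 - ‖b‖ ^ 2) : ℝ) : ℂ) ≠ 0 := by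
    norm_cast; linarith [Real.sqrt_nonneg (1 - ‖b‖ ^ 2)]
  have hden := one_sub_conj_mul_ne_zero hb (norm_diskMidpoint_lt_one hb)
  rw [diskMobius, ← mul_div_assoc, div_eq_iff hden, diskMidpoint, map_div₀, conj_ofReal,
    ← mul_div_assoc, conj_mul', hlb]
  -- with `μ = 1 + √(1 - ‖b‖²)` this is `μ² - 2μ + ‖b‖² = 0`
  field_simp
  push_cast
  linear_combination (-l * b) * hr

structure IsAntiholomorphicInvolutionOfDisk (σ : ℂ → ℂ) : Prop where
  mapsTo : MapsTo σ (ball 0 1) (ball 0 1)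
  involutive : ∀ z ∈ ball (0 : ℂ) 1, σ (σ z) = z
  differentiableOn_conj_comp : DifferentiableOn ℂ (conj ∘ σ) (ball 0 1)

namespace IsAntiholomorphicInvolutionOfDisk

variable {σ : ℂ → ℂ}

/-- `conj ∘ σ` is an automorphism of the disk, with inverse `σ ∘ conj`. -/
theorem exists_conj_eq_mul_diskMobius (hσ : IsAntiholomorphicInvolutionOfDisk σ) :
    ∃ l : ℂ, ‖l‖ = 1 ∧ ∀ z ∈ ball (0 : ℂ) 1, conj (σ z) = l * diskMobius (σ 0) z := by
  have hD : MapsTo (conj ∘ σ) (ball 0 1) (ball 0 1) := (mapsTo_conj_ball 1).comp hσ.mapsTo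
  have h₀ : σ 0 ∈ ball (0 : ℂ) 1 := hσ.mapsTo (mem_ball_self one_pos)
  exact exists_eq_mul_diskMobius_of_leftInverse hσ.differentiableOn_conj_comp hD
    (hσ.differentiableOn_conj_comp.conj_conj isOpen_ball (mapsTo_conj_ball 1))
    ((mapsTo_conj_ball 1).comp (hD.comp (mapsTo_conj_ball 1)))
    (fun z hz => by simp [hσ.involutive z hz]) (mem_ball_zero_iff.mp h₀)
    (by simp [hσ.involutive 0 (mem_ball_self one_pos)])

theorem exists_fixedPoint (hσ : IsAntiholomorphicInvolutionOfDisk σ) :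
    ∃ a : ℂ, ‖a‖ < 1 ∧ σ a = a := by
  obtain ⟨l, -, hl⟩ := hσ.exists_conj_eq_mul_diskMobius
  have hb : ‖σ 0‖ < 1 := mem_ball_zero_iff.mp (hσ.mapsTo (mem_ball_self one_pos))
  have hlb : conj (σ 0) = -(l * σ 0) := by
    simpa using hl 0 (mem_ball_self one_pos)
  refine ⟨diskMidpoint (σ 0), norm_diskMidpoint_lt_one hb, (starRingEnd ℂ).injective ?_⟩
  rw [hl _ (mem_ball_zero_iff.mpr (norm_diskMidpoint_lt_one hb)),
    mul_diskMobius_diskMidpoint hb hlb]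

theorem diskMobius_comp_comp (hσ : IsAntiholomorphicInvolutionOfDisk σ) {a : ℂ}
    (ha : ‖a‖ < 1) :
    IsAntiholomorphicInvolutionOfDisk (diskMobius a ∘ σ ∘ diskMobius (-a)) where
  mapsTo :=
    (mapsTo_diskMobius ha).comp (hσ.mapsTo.comp (mapsTo_diskMobius (by rwa [norm_neg])))
  involutive w hw := by
    have hw' := mapsTo_diskMobius (a := -a) (by rwa [norm_neg]) hw
    simp only [Function.comp_apply]
    rw [diskMobius_neg_diskMobius ha (mem_ball_zero_iff.mp (hσ.mapsTo hw')),
      hσ.involutive _ hw', diskMobius_diskMobius_neg ha (mem_ball_zero_iff.mp hw)]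
  differentiableOn_conj_comp := by
    have ha' : ‖-a‖ < 1 := by rwa [norm_neg]
    have hconj : conj ∘ (diskMobius a ∘ σ ∘ diskMobius (-a)) =
        diskMobius (conj a) ∘ (conj ∘ σ) ∘ diskMobius (-a) := by
      ext w; simp [conj_diskMobius]
    rw [hconj]
    exact (differentiableOn_diskMobius (by rwa [norm_conj])).comp
      (hσ.differentiableOn_conj_comp.comp (differentiableOn_diskMobius ha')
        (mapsTo_diskMobius ha'))
      ((mapsTo_conj_ball 1).comp (hσ.mapsTo.comp (mapsTo_diskMobius ha')))

theorem exists_diskMobius_apply_eq_conj (hσ : IsAntiholomorphicInvolutionOfDisk σ) {a : ℂ}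
    (ha : ‖a‖ < 1) (hfix : σ a = a) :
    ∃ k : ℂ, ‖k‖ = 1 ∧
      ∀ z ∈ ball (0 : ℂ) 1, diskMobius a (σ z) = conj (k * diskMobius a z) := by
  obtain ⟨k, hk, hkσ⟩ := (hσ.diskMobius_comp_comp ha).exists_conj_eq_mul_diskMobius
  refine ⟨k, hk, fun z hz => ?_⟩
  have := hkσ _ (mapsTo_diskMobius ha hz)
  simp only [Function.comp_apply, diskMobius_zero_right, neg_neg, hfix, diskMobius_self,
    diskMobius_zero_left, diskMobius_neg_diskMobius ha (mem_ball_zero_iff.mp hz)] at this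
  rw [← this, Complex.conj_conj]

end IsAntiholomorphicInvolutionOfDisk

theorem exists_exp_mul_I_mul_conj_eq {k : ℂ} (hk : ‖k‖ = 1) :
    ∃ θ : ℝ, exp (θ * I) * conj k = conj (exp (θ * I)) := by
  obtain ⟨t, rfl⟩ : ∃ t : ℝ, k = exp (t * I) :=
    ⟨arg k, by simpa [hk] using (norm_mul_exp_arg_mul_I k).symm⟩
  refine ⟨t / 2, ?_⟩
  rw [← exp_conj, ← exp_conj, ← exp_add]
  congr 1
  simp only [map_mul, conj_ofReal, conj_I]
  push_cast
  ring

/-- Every antiholomorphic involution of the open unit disk is conjugate to complex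
conjugation by a holomorphic automorphism `H(z) = e^{iθ}(z−a)/(1−ā z)` of the disk. -/
theorem antiholomorphic_involution_conjugate_to_conj (σ : ℂ → ℂ)
    (hbij : Set.BijOn σ {z : ℂ | ‖z‖ < 1} {z : ℂ | ‖z‖ < 1})
    (hinv : ∀ z : ℂ, ‖z‖ < 1 → σ (σ z) = z)
    (hholo : DifferentiableOn ℂ (fun z => (starRingEnd ℂ) (σ z)) {z : ℂ | ‖z‖ < 1}) :
    ∃ (a : ℂ) (θ : ℝ), ‖a‖ < 1 ∧
      ∀ z : ℂ, ‖z‖ < 1 →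
        Complex.exp (θ * Complex.I) * (σ z - a) / (1 - (starRingEnd ℂ) a * σ z) =
          (starRingEnd ℂ)
            (Complex.exp (θ * Complex.I) * (z - a) / (1 - (starRingEnd ℂ) a * z)) := by
  have hD : ball (0 : ℂ) 1 = {z : ℂ | ‖z‖ < 1} := Set.ext fun _ => mem_ball_zero_iff
  have hσ : IsAntiholomorphicInvolutionOfDisk σ :=
    ⟨hD ▸ hbij.mapsTo, fun z hz => hinv z (mem_ball_zero_iff.mp hz), hD ▸ hholo⟩
  obtain ⟨a, ha, hfix⟩ := hσ.exists_fixedPoint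
  obtain ⟨k, hk, hkσ⟩ := hσ.exists_diskMobius_apply_eq_conj ha hfix
  obtain ⟨θ, hθ⟩ := exists_exp_mul_I_mul_conj_eq hk
  refine ⟨a, θ, ha, fun z hz => ?_⟩
  simp only [mul_div_assoc]
  change exp (θ * I) * diskMobius a (σ z) = conj (exp (θ * I) * diskMobius a z)
  rw [hkσ z (mem_ball_zero_iff.mpr hz), map_mul, map_mul, ← mul_assoc, hθ]
end

section
/- Let λ > 0, N ∈ ℕ, and f_k ∈ ℂ for |k| ≤ N, and set f(θ) = Σ_{|k|≤N} f_k e^{ikθ}. Define u : [0,∞) × ℝ → ℂ by u(t, θ) = Σ_{|k|≤N} f_k e^{−t√(k²+λ)} e^{ikθ}. Then: (i) u is smooth and satisfies ∂²u/∂t² + ∂²u/∂θ² = λ·u on (0,∞) × ℝ; (ii) u(0, θ) = f(θ); (iii) u is square integrable on (0,∞) × (0,2π); (iv) −∂u/∂t(0, θ) = Σ_{|k|≤N} √(k²+λ) f_k e^{ikθ}; (v) u is the unique such solution: if v : [0,∞) × ℝ → ℂ is continuous, 2π-periodic in θ, twice continuously differentiable on (0,∞) × ℝ, square integrable on (0,∞)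 × (0,2π), satisfies ∂²v/∂t² + ∂²v/∂θ² = λ·v on (0,∞) × ℝ and v(0,·) = f, then v = u. -/
open Complex (I)
open MeasureTheory intervalIntegral Set Real Filter

private lemma hderiv_cexp (c : ℂ) (t : ℝ) :
    HasDerivAt (fun s : ℝ => Complex.exp (c * s)) (c * Complex.exp (c * t)) t := by
  have h1 : HasDerivAt (fun s : ℝ => (s : ℂ)) 1 t := Complex.ofRealCLM.hasDerivAt
  have h2 : HasDerivAt (fun s : ℝ => c * (s : ℂ)) c t := by
    simpa using h1.const_mul c
  simpa [mul_comm] using h2.cexp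

private lemma const_on_Ioi {h : ℝ → ℂ} (hd : ∀ x ∈ Set.Ioi (0:ℝ), HasDerivAt h 0 x) :
    ∀ x ∈ Set.Ioi (0:ℝ), ∀ y ∈ Set.Ioi (0:ℝ), h x = h y := by
  intro x hx y hy
  refine (convex_Ioi (0:ℝ)).is_const_of_fderivWithin_eq_zero
    (fun z hz => ((hd z hz).differentiableAt).differentiableWithinAt) (fun z hz => ?_) hx hy
  rw [fderivWithin_of_isOpen isOpen_Ioi hz]
  have := (hd z hz).hasFDerivAt.fderiv
  rw [this]; ext w; simp

private lemma hderiv_fst {F : ℝ × ℝ → ℂ} {D : ℝ × ℝ →L[ℝ] ℂ} {t θ : ℝ}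
    (h : HasFDerivAt F D (t, θ)) : HasDerivAt (fun s => F (s, θ)) (D (1, 0)) t := by
  have hl : HasDerivAt (fun s : ℝ => ((s : ℝ), θ)) ((1:ℝ), (0:ℝ)) t :=
    (hasDerivAt_id t).prodMk (hasDerivAt_const t θ)
  exact h.comp_hasDerivAt t hl

private lemma hderiv_snd {F : ℝ × ℝ → ℂ} {D : ℝ × ℝ →L[ℝ] ℂ} {t θ : ℝ}
    (h : HasFDerivAt F D (t, θ)) : HasDerivAt (fun φ => F (t, φ)) (D (0, 1)) θ := by
  have hl : HasDerivAt (fun φ : ℝ => (t, (φ : ℝ))) ((0:ℝ), (1:ℝ)) θ :=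
    (hasDerivAt_const θ t).prodMk (hasDerivAt_id θ)
  exact h.comp_hasDerivAt θ hl

private lemma fourier_unique {h : ℝ → ℂ} (hc : Continuous h)
    (hper : ∀ θ, h (θ + 2 * π) = h θ)
    (hz : ∀ k : ℤ, (∫ θ in (0:ℝ)..(2*π), h θ * Complex.exp ((-(k:ℂ) * I) * θ)) = 0) :
    ∀ θ, h θ = 0 := by
  haveI : Fact (0 < 2 * π) := ⟨by positivity⟩
  set H : AddCircle (2 * π) → ℂ := AddCircle.liftIco (2*π) 0 h with hH
  have hcont : Continuous H := by
    refine AddCircle.liftIco_continuous ?_ ?_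
    · exact (hper 0).symm.trans (by rw [zero_add])
    · exact hc.continuousOn
  set HC : C(AddCircle (2*π), ℂ) := ⟨H, hcont⟩ with hHC
  have hcoeff : ∀ k : ℤ, fourierCoeff (HC : AddCircle (2*π) → ℂ) k = 0 := by
    intro k
    have h1 : fourierCoeff (HC : AddCircle (2*π) → ℂ) k
        = fourierCoeffOn (lt_add_of_pos_right 0 (by positivity : (0:ℝ) < 2*π)) h k := by
      exact fourierCoeff_liftIco_eq h k
    rw [h1, fourierCoeffOn_eq_integral]
    have h2 : (∫ x in (0:ℝ)..0+2*π, (fourier (-k)) (x : AddCircle (0+2*π-0)) • h x) = 0 := by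
      rw [← hz k, show (0:ℝ)+2*π = 2*π from zero_add _]
      refine intervalIntegral.integral_congr fun x _ => ?_
      rw [smul_eq_mul, mul_comm]
      congr 1
      rw [fourier_coe_apply]
      congr 1
      have hπ : (π:ℂ) ≠ 0 := Complex.ofReal_ne_zero.mpr Real.pi_ne_zero
      push_cast
      field_simp
      ring
    rw [h2, smul_zero]
  have hsum : HasSum (fun i => fourierCoeff (HC : AddCircle (2*π) → ℂ) i • fourier i) HC :=
    hasSum_fourier_series_of_summable (by simp [funext hcoeff, summable_zero])
  have hzero : HC = 0 := by
    have h0 : HasSum (fun _ : ℤ => (0 : C(AddCircle (2*π), ℂ))) HC := by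
      convert hsum using 2 with i
      rw [hcoeff i, zero_smul]
    exact (hasSum_zero.unique h0).symm
  intro θ
  have hmem := toIcoMod_mem_Ico' (by positivity : (0:ℝ) < 2*π) θ
  set θ' := toIcoMod (by positivity : (0:ℝ) < 2*π) 0 θ with hθ'
  have hper' : Function.Periodic h (2*π) := hper
  have e1 : h θ = h θ' := by
    have := toIcoMod_add_toIcoDiv_zsmul (by positivity : (0:ℝ) < 2*π) 0 θ
    conv_lhs => rw [← this]
    exact (hper'.zsmul (toIcoDiv (by positivity : (0:ℝ) < 2*π) 0 θ)) θ'
  have e2 : h θ' = H (θ' : AddCircle (2*π)) := by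
    rw [hH]
    exact (AddCircle.liftIco_coe_apply (by simpa using hmem)).symm
  have : H (θ' : AddCircle (2*π)) = 0 := by
    have : HC (θ' : AddCircle (2*π)) = 0 := by rw [hzero]; rfl
    exact this
  rw [e1, e2, this]


private lemma vanish_aux (lam : ℝ) (hlam : 0 < lam) {W : ℝ × ℝ → ℂ}
    (hWc : ContinuousOn W (Set.Ici 0 ×ˢ (Set.univ : Set ℝ)))
    (hWper : ∀ t θ : ℝ, W (t, θ + 2 * π) = W (t, θ))
    (hW2 : ContDiffOn ℝ 2 W (Set.Ioi 0 ×ˢ (Set.univ : Set ℝ)))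
    (hWL2 : MeasureTheory.IntegrableOn (fun p : ℝ × ℝ => ‖W p‖ ^ 2)
      (Set.Ioi (0:ℝ) ×ˢ Set.Ioo 0 (2*π)))
    (hWpde : ∀ t θ : ℝ, 0 < t →
      fderiv ℝ (fun q => fderiv ℝ W q (1, 0)) (t, θ) (1, 0) +
        fderiv ℝ (fun q => fderiv ℝ W q (0, 1)) (t, θ) (0, 1) = (lam : ℂ) * W (t, θ))
    (hW0 : ∀ θ : ℝ, W (0, θ) = 0) :
    ∀ t θ : ℝ, 0 ≤ t → W (t, θ) = 0 := by
  have hΩ : IsOpen (Set.Ioi (0:ℝ) ×ˢ (Set.univ : Set ℝ)) := isOpen_Ioi.prod isOpen_univ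
  have hmem : ∀ {p : ℝ × ℝ}, 0 < p.1 → p ∈ Set.Ioi (0:ℝ) ×ˢ (Set.univ : Set ℝ) :=
    fun h => ⟨h, Set.mem_univ _⟩
  -- slice continuity
  have hslice : ∀ t : ℝ, 0 ≤ t → Continuous (fun θ => W (t, θ)) := by
    intro t ht
    rw [← continuousOn_univ]
    exact hWc.comp ((continuous_const.prodMk continuous_id).continuousOn)
      (fun θ _ => ⟨ht, Set.mem_univ _⟩)
  -- first derivatives
  have hd0 : ∀ p : ℝ × ℝ, 0 < p.1 → HasFDerivAt W (fderiv ℝ W p) p := fun p hp =>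
    ((hW2.differentiableOn (by norm_num)).differentiableAt (hΩ.mem_nhds (hmem hp))).hasFDerivAt
  have hfd : ContDiffOn ℝ 1 (fderiv ℝ W) (Set.Ioi (0:ℝ) ×ˢ (Set.univ : Set ℝ)) :=
    hW2.fderiv_of_isOpen hΩ (by norm_num)
  have hW1cd : ContDiffOn ℝ 1 (fun q => fderiv ℝ W q (1, 0))
      (Set.Ioi (0:ℝ) ×ˢ (Set.univ : Set ℝ)) :=
    (ContinuousLinearMap.apply ℝ ℂ ((1:ℝ), (0:ℝ))).contDiff.comp_contDiffOn hfd
  have hWθcd : ContDiffOn ℝ 1 (fun q => fderiv ℝ W q (0, 1))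
      (Set.Ioi (0:ℝ) ×ˢ (Set.univ : Set ℝ)) :=
    (ContinuousLinearMap.apply ℝ ℂ ((0:ℝ), (1:ℝ))).contDiff.comp_contDiffOn hfd
  have hW1c : ContinuousOn (fun q => fderiv ℝ W q (1, 0))
      (Set.Ioi (0:ℝ) ×ˢ (Set.univ : Set ℝ)) := hW1cd.continuousOn
  have hW11c : ContinuousOn (fun q => fderiv ℝ (fun r => fderiv ℝ W r (1, 0)) q (1, 0))
      (Set.Ioi (0:ℝ) ×ˢ (Set.univ : Set ℝ)) :=
    (ContinuousLinearMap.apply ℝ ℂ ((1:ℝ), (0:ℝ))).continuous.comp_continuousOn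
      (hW1cd.continuousOn_fderiv_of_isOpen hΩ le_rfl)
  have hd1 : ∀ p : ℝ × ℝ, 0 < p.1 → HasFDerivAt (fun q => fderiv ℝ W q (1, 0))
      (fderiv ℝ (fun q => fderiv ℝ W q (1, 0)) p) p := fun p hp =>
    ((hW1cd.differentiableOn one_ne_zero).differentiableAt (hΩ.mem_nhds (hmem hp))).hasFDerivAt
  have hdθ : ∀ p : ℝ × ℝ, 0 < p.1 → HasFDerivAt (fun q => fderiv ℝ W q (0, 1))
      (fderiv ℝ (fun q => fderiv ℝ W q (0, 1)) p) p := fun p hp =>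
    ((hWθcd.differentiableOn one_ne_zero).differentiableAt (hΩ.mem_nhds (hmem hp))).hasFDerivAt
  have ht1 : ∀ t θ : ℝ, 0 < t →
      HasDerivAt (fun s => W (s, θ)) (fderiv ℝ W (t, θ) (1, 0)) t :=
    fun t θ ht => hderiv_fst (hd0 (t, θ) ht)
  have ht2 : ∀ t θ : ℝ, 0 < t →
      HasDerivAt (fun s => fderiv ℝ W (s, θ) (1, 0))
        (fderiv ℝ (fun q => fderiv ℝ W q (1, 0)) (t, θ) (1, 0)) t :=
    fun t θ ht => hderiv_fst (hd1 (t, θ) ht)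
  have hθ1 : ∀ t θ : ℝ, 0 < t →
      HasDerivAt (fun φ => W (t, φ)) (fderiv ℝ W (t, θ) (0, 1)) θ :=
    fun t θ ht => hderiv_snd (hd0 (t, θ) ht)
  have hθ2 : ∀ t θ : ℝ, 0 < t →
      HasDerivAt (fun φ => fderiv ℝ W (t, φ) (0, 1))
        (fderiv ℝ (fun q => fderiv ℝ W q (0, 1)) (t, θ) (0, 1)) θ :=
    fun t θ ht => hderiv_snd (hdθ (t, θ) ht)
  -- periodicity of the θ-derivative
  have perWθ : ∀ t θ : ℝ, 0 < t →
      fderiv ℝ W (t, θ + 2*π) (0, 1) = fderiv ℝ W (t, θ) (0, 1) := by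
    intro t θ ht
    have h1 : HasDerivAt (fun φ => W (t, φ + 2*π)) (fderiv ℝ W (t, θ + 2*π) (0, 1)) θ :=
      HasDerivAt.comp_add_const θ (2*π) (hθ1 t (θ + 2*π) ht)
    have h2 : (fun φ => W (t, φ + 2*π)) = fun φ => W (t, φ) := funext (fun φ => hWper t φ)
    rw [h2] at h1
    exact h1.unique (hθ1 t θ ht)
  -- slice continuity on the open half
  have hsliceΩ : ∀ (Φ : ℝ × ℝ → ℂ), ContinuousOn Φ (Set.Ioi 0 ×ˢ (Set.univ : Set ℝ)) →
      ∀ t : ℝ, 0 < t → Continuous (fun θ => Φ (t, θ)) := by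
    intro Φ hΦ t ht
    rw [← continuousOn_univ]
    exact hΦ.comp ((continuous_const.prodMk continuous_id).continuousOn)
      (fun θ _ => ⟨ht, Set.mem_univ _⟩)
  have hWcΩ : ContinuousOn W (Set.Ioi 0 ×ˢ (Set.univ : Set ℝ)) :=
    hWc.mono (Set.prod_mono Ioi_subset_Ici_self subset_rfl)
  have hWθθc : ContinuousOn (fun q => fderiv ℝ (fun r => fderiv ℝ W r (0, 1)) q (0, 1))
      (Set.Ioi (0:ℝ) ×ˢ (Set.univ : Set ℝ)) :=
    (ContinuousLinearMap.apply ℝ ℂ ((0:ℝ), (1:ℝ))).continuous.comp_continuousOn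
      (hWθcd.continuousOn_fderiv_of_isOpen hΩ le_rfl)
  have key : ∀ k : ℤ, ∀ t : ℝ, 0 ≤ t →
      (∫ θ in (0:ℝ)..2*π, W (t, θ) * Complex.exp ((-(k:ℂ) * I) * θ)) = 0 := by
    intro k
    set d : ℂ := -(k:ℂ) * I with hd
    set E : ℝ → ℂ := fun θ : ℝ => Complex.exp (d * θ) with hEdef
    have hEc : Continuous E :=
      Complex.continuous_exp.comp (continuous_const.mul Complex.continuous_ofReal)
    have hE1 : ∀ θ : ℝ, HasDerivAt E (d * E θ) θ := fun θ => hderiv_cexp d θ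
    have hEnorm : ∀ θ : ℝ, ‖E θ‖ = 1 := by
      intro θ
      have h0 : d * (θ:ℂ) = (((-(k:ℝ) * θ : ℝ)) : ℂ) * I := by rw [hd]; push_cast; ring
      show ‖Complex.exp (d * (θ:ℂ))‖ = 1
      rw [h0, Complex.norm_exp_ofReal_mul_I]
    have hEper : ∀ θ : ℝ, E (θ + 2*π) = E θ := by
      intro θ
      show Complex.exp (d * ((θ + 2*π : ℝ) : ℂ)) = Complex.exp (d * (θ:ℂ))
      have h1 : d * ((θ + 2*π : ℝ) : ℂ) = d * θ + d * ((2*π : ℝ) : ℂ) := by push_cast; ring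
      have h2 : Complex.exp (d * ((2*π:ℝ) : ℂ)) = 1 := by
        rw [show d * ((2*π:ℝ):ℂ) = ((-k : ℤ) : ℂ) * (2*π*I) by rw [hd]; push_cast; ring]
        exact Complex.exp_int_mul_two_pi_mul_I (-k)
      rw [h1, Complex.exp_add, h2, mul_one]
    have hEbdry : E (2*π) = E 0 := by simpa using hEper 0
    set g : ℝ → ℂ := fun t => ∫ θ in (0:ℝ)..2*π, W (t, θ) * E θ with hgdef
    set G1 : ℝ → ℂ := fun t => ∫ θ in (0:ℝ)..2*π, (fderiv ℝ W (t, θ) (1, 0)) * E θ with hG1def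
    have hg0 : g 0 = 0 := by
      rw [hgdef]
      simp only [hW0, zero_mul]
      simp
    -- differentiation under the interval integral
    have domderiv : ∀ (Φ Φ' : ℝ × ℝ → ℂ),
        ContinuousOn Φ (Set.Ioi 0 ×ˢ (Set.univ : Set ℝ)) →
        ContinuousOn Φ' (Set.Ioi 0 ×ˢ (Set.univ : Set ℝ)) →
        (∀ x θ : ℝ, 0 < x → HasDerivAt (fun s => Φ (s, θ)) (Φ' (x, θ)) x) →
        ∀ t : ℝ, 0 < t → HasDerivAt (fun x => ∫ θ in (0:ℝ)..2*π, Φ (x, θ) * E θ)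
          (∫ θ in (0:ℝ)..2*π, Φ' (t, θ) * E θ) t := by
      intro Φ Φ' hΦc hΦ'c hΦd t ht
      have hsub : Set.Icc (t/2) (t+t) ×ˢ Set.Icc (-(2*π)) (2*π) ⊆
          Set.Ioi (0:ℝ) ×ˢ (Set.univ : Set ℝ) := by
        rintro ⟨x, y⟩ ⟨hx, _⟩
        exact ⟨lt_of_lt_of_le (half_pos ht) hx.1, Set.mem_univ _⟩
      obtain ⟨C, hC⟩ := (isCompact_Icc.prod isCompact_Icc :
          IsCompact (Set.Icc (t/2) (t+t) ×ˢ Set.Icc (-(2*π)) (2*π))).exists_bound_of_continuousOn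
        (hΦ'c.mono hsub)
      have hball : ∀ x ∈ Metric.ball t (t/2), x ∈ Set.Icc (t/2) (t+t) := by
        intro x hx
        rw [Metric.mem_ball, Real.dist_eq, abs_sub_lt_iff] at hx
        constructor <;> linarith [hx.1, hx.2]
      have hΙ : ∀ θ ∈ Set.uIoc (0:ℝ) (2*π), θ ∈ Set.Icc (-(2*π)) (2*π) := by
        intro θ hθ
        rw [Set.uIoc_of_le (by positivity : (0:ℝ) ≤ 2*π)] at hθ
        exact ⟨by linarith [hθ.1, Real.pi_pos], hθ.2⟩
      refine (intervalIntegral.hasDerivAt_integral_of_dominated_loc_of_deriv_le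
        (F := fun x θ => Φ (x, θ) * E θ) (F' := fun x θ => Φ' (x, θ) * E θ)
        (bound := fun _ => C) (Metric.ball_mem_nhds t (half_pos ht)) ?_ ?_ ?_ ?_ ?_ ?_).2
      · filter_upwards [Ioi_mem_nhds ht] with x hx
        exact ((hsliceΩ Φ hΦc x hx).mul hEc).aestronglyMeasurable
      · exact ((hsliceΩ Φ hΦc t ht).mul hEc).intervalIntegrable _ _
      · exact ((hsliceΩ Φ' hΦ'c t ht).mul hEc).aestronglyMeasurable
      · refine Filter.Eventually.of_forall (fun θ => ?_)
        intro hθ x hx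
        have : ‖Φ' (x, θ)‖ ≤ C := hC (x, θ) ⟨hball x hx, hΙ θ hθ⟩
        calc ‖Φ' (x, θ) * E θ‖ = ‖Φ' (x, θ)‖ := by rw [norm_mul, hEnorm, mul_one]
        _ ≤ C := this
      · exact intervalIntegrable_const
      · refine Filter.Eventually.of_forall (fun θ => ?_)
        intro hθ x hx
        have hxpos : 0 < x := lt_of_lt_of_le (half_pos ht) (hball x hx).1
        exact (hΦd x θ hxpos).mul_const (E θ)
    have hgd : ∀ t : ℝ, 0 < t → HasDerivAt g (G1 t) t := fun t ht =>
      domderiv W (fun q => fderiv ℝ W q (1, 0)) hWcΩ hW1c (fun x θ hx => ht1 x θ hx) t ht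
    have hG1d : ∀ t : ℝ, 0 < t → HasDerivAt G1
        (∫ θ in (0:ℝ)..2*π, (fderiv ℝ (fun q => fderiv ℝ W q (1, 0)) (t, θ) (1, 0)) * E θ) t :=
      fun t ht =>
      domderiv (fun q => fderiv ℝ W q (1, 0))
        (fun q => fderiv ℝ (fun r => fderiv ℝ W r (1, 0)) q (1, 0)) hW1c hW11c
        (fun x θ hx => ht2 x θ hx) t ht
    -- constants
    have hlam' : 0 < lam := hlam
    have hκpos : 0 < (k:ℝ)^2 + lam := by positivity
    set μ : ℝ := Real.sqrt ((k:ℝ)^2 + lam) with hμdef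
    have hμpos : 0 < μ := Real.sqrt_pos.mpr hκpos
    set c : ℂ := (μ : ℂ) with hcdef
    have hc2 : c^2 = (((k:ℝ)^2 + lam : ℝ) : ℂ) := by
      rw [hcdef, ← Complex.ofReal_pow, hμdef, Real.sq_sqrt hκpos.le]
    have hcne : c ≠ 0 := by
      rw [hcdef]
      exact_mod_cast Complex.ofReal_ne_zero.mpr hμpos.ne'
    have hd2 : d^2 = -((k:ℂ)^2) := by rw [hd]; ring_nf; rw [Complex.I_sq]; ring
    -- integration by parts: ∫ Wθθ E = d² g
    have ibp : ∀ t : ℝ, 0 < t →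
        (∫ θ in (0:ℝ)..2*π, (fderiv ℝ (fun q => fderiv ℝ W q (0, 1)) (t, θ) (0, 1)) * E θ)
          = d^2 * g t := by
      intro t ht
      have hiW : IntervalIntegrable (fun θ => W (t, θ)) volume 0 (2*π) :=
        (hsliceΩ W hWcΩ t ht).intervalIntegrable _ _
      have hiWθ : IntervalIntegrable (fun θ => fderiv ℝ W (t, θ) (0, 1)) volume 0 (2*π) :=
        (hsliceΩ _ (hWθcd.continuousOn) t ht).intervalIntegrable _ _
      have hiWθθ : IntervalIntegrable
          (fun θ => fderiv ℝ (fun q => fderiv ℝ W q (0, 1)) (t, θ) (0, 1)) volume 0 (2*π) :=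
        (hsliceΩ _ hWθθc t ht).intervalIntegrable _ _
      have hiE : IntervalIntegrable (fun θ => d * E θ) volume 0 (2*π) :=
        (continuous_const.mul hEc).intervalIntegrable _ _
      have hiE2 : IntervalIntegrable (fun θ => d * (d * E θ)) volume 0 (2*π) :=
        (continuous_const.mul (continuous_const.mul hEc)).intervalIntegrable _ _
      have step1 := intervalIntegral.integral_mul_deriv_eq_deriv_mul
        (u := E) (u' := fun θ => d * E θ)
        (v := fun θ => fderiv ℝ W (t, θ) (0, 1))
        (v' := fun θ => fderiv ℝ (fun q => fderiv ℝ W q (0, 1)) (t, θ) (0, 1))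
        (fun x _ => hE1 x) (fun x _ => hθ2 t x ht) hiE hiWθθ
      have step2 := intervalIntegral.integral_mul_deriv_eq_deriv_mul
        (u := fun θ => d * E θ) (u' := fun θ => d * (d * E θ))
        (v := fun θ => W (t, θ)) (v' := fun θ => fderiv ℝ W (t, θ) (0, 1))
        (fun x _ => (hE1 x).const_mul d) (fun x _ => hθ1 t x ht) hiE2 hiWθ
      have hb1 : E (2*π) * fderiv ℝ W (t, 2*π) (0, 1) - E 0 * fderiv ℝ W (t, 0) (0, 1) = 0 := by
        have hp := perWθ t 0 ht
        rw [zero_add] at hp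
        rw [hEbdry, hp, sub_self]
      have hb2 : d * E (2*π) * W (t, 2*π) - d * E 0 * W (t, 0) = 0 := by
        have hp := hWper t 0
        rw [zero_add] at hp
        rw [hEbdry, hp, sub_self]
      have comm1 : (∫ θ in (0:ℝ)..2*π,
          (fderiv ℝ (fun q => fderiv ℝ W q (0, 1)) (t, θ) (0, 1)) * E θ)
          = ∫ θ in (0:ℝ)..2*π,
            E θ * (fderiv ℝ (fun q => fderiv ℝ W q (0, 1)) (t, θ) (0, 1)) :=
        intervalIntegral.integral_congr (fun θ _ => mul_comm _ _)
      have final : (∫ θ in (0:ℝ)..2*π, d * (d * E θ) * W (t, θ)) = d^2 * g t := by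
        rw [hgdef]
        rw [← intervalIntegral.integral_const_mul]
        exact intervalIntegral.integral_congr (fun θ _ => by ring)
      rw [comm1, step1, hb1, step2, hb2]
      rw [final]
      ring
    -- the ODE : G1' = ((k²+lam)) g
    have hG1d' : ∀ t : ℝ, 0 < t → HasDerivAt G1 ((((k:ℝ)^2 + lam : ℝ) : ℂ) * g t) t := by
      intro t ht
      have h := hG1d t ht
      have heq : (∫ θ in (0:ℝ)..2*π,
          (fderiv ℝ (fun q => fderiv ℝ W q (1, 0)) (t, θ) (1, 0)) * E θ)
          = (((k:ℝ)^2 + lam : ℝ) : ℂ) * g t := by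
        have hsplit : (∫ θ in (0:ℝ)..2*π,
            (fderiv ℝ (fun q => fderiv ℝ W q (1, 0)) (t, θ) (1, 0)) * E θ)
            = ∫ θ in (0:ℝ)..2*π, ((lam : ℂ) * (W (t, θ) * E θ) -
              (fderiv ℝ (fun q => fderiv ℝ W q (0, 1)) (t, θ) (0, 1)) * E θ) := by
          refine intervalIntegral.integral_congr (fun θ _ => ?_)
          have hp := hWpde t θ ht
          have : fderiv ℝ (fun q => fderiv ℝ W q (1, 0)) (t, θ) (1, 0)
              = (lam : ℂ) * W (t, θ) - fderiv ℝ (fun q => fderiv ℝ W q (0, 1)) (t, θ) (0, 1) := by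
            linear_combination hp
          rw [this]; ring
        have hint1 : IntervalIntegrable (fun θ => (lam : ℂ) * (W (t, θ) * E θ)) volume 0 (2*π) :=
          (continuous_const.mul ((hsliceΩ W hWcΩ t ht).mul hEc)).intervalIntegrable _ _
        have hint2 : IntervalIntegrable
            (fun θ => (fderiv ℝ (fun q => fderiv ℝ W q (0, 1)) (t, θ) (0, 1)) * E θ)
            volume 0 (2*π) := ((hsliceΩ _ hWθθc t ht).mul hEc).intervalIntegrable _ _
        rw [hsplit, intervalIntegral.integral_sub hint1 hint2,
          intervalIntegral.integral_const_mul, ibp t ht]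
        have : (∫ θ in (0:ℝ)..2*π, W (t, θ) * E θ) = g t := rfl
        rw [this, hd2]
        push_cast
        ring
      rwa [heq] at h
    -- solve the ODE: g t = a e^{-ct} + b e^{ct} on (0,∞)
    have hP : ∀ x ∈ Set.Ioi (0:ℝ),
        HasDerivAt (fun t : ℝ => Complex.exp (-c*t) * (G1 t + c * g t)) 0 x := by
      intro x hx
      have h1 := hderiv_cexp (-c) x
      have h2 := (hG1d' x hx).add ((hgd x hx).const_mul c)
      have h3 := h1.mul h2
      refine h3.congr_deriv ?_
      simp only [Pi.add_apply]
      linear_combination -(Complex.exp (-c*(x:ℂ)) * g x) * hc2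
    have hQ : ∀ x ∈ Set.Ioi (0:ℝ),
        HasDerivAt (fun t : ℝ => Complex.exp (c*t) * (G1 t - c * g t)) 0 x := by
      intro x hx
      have h1 := hderiv_cexp c x
      have h2 := (hG1d' x hx).sub ((hgd x hx).const_mul c)
      have h3 := h1.mul h2
      refine h3.congr_deriv ?_
      simp only [Pi.sub_apply]
      linear_combination -(Complex.exp (c*(x:ℂ)) * g x) * hc2
    set P1 : ℂ := Complex.exp (-c*(1:ℝ)) * (G1 1 + c * g 1) with hP1
    set Q1 : ℂ := Complex.exp (c*(1:ℝ)) * (G1 1 - c * g 1) with hQ1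
    have hPc : ∀ x ∈ Set.Ioi (0:ℝ), Complex.exp (-c*x) * (G1 x + c * g x) = P1 :=
      fun x hx => const_on_Ioi hP x hx 1 (by norm_num)
    have hQc : ∀ x ∈ Set.Ioi (0:ℝ), Complex.exp (c*x) * (G1 x - c * g x) = Q1 :=
      fun x hx => const_on_Ioi hQ x hx 1 (by norm_num)
    set a : ℂ := -Q1 / (2*c) with ha
    set b : ℂ := P1 / (2*c) with hb
    have hab : ∀ t : ℝ, 0 < t →
        g t = a * Complex.exp (-c*t) + b * Complex.exp (c*t) := by
      intro t ht
      have eP := hPc t ht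
      have eQ := hQc t ht
      have hexp : Complex.exp (-c*(t:ℂ)) * Complex.exp (c*(t:ℂ)) = 1 := by
        rw [← Complex.exp_add]
        rw [show -c*(t:ℂ) + c*(t:ℂ) = 0 by ring]
        exact Complex.exp_zero
      have h2c : g t * (2*c) = P1 * Complex.exp (c*(t:ℂ)) - Q1 * Complex.exp (-c*(t:ℂ)) := by
        linear_combination Complex.exp (c*(t:ℂ)) * eP - Complex.exp (-c*(t:ℂ)) * eQ
          - 2*c*(g t)*hexp
      have h2cne : (2:ℂ)*c ≠ 0 := mul_ne_zero two_ne_zero hcne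
      rw [ha, hb, div_mul_eq_mul_div, div_mul_eq_mul_div, ← add_div,
        eq_div_iff h2cne]
      linear_combination h2c
    -- norms of exponentials
    have hnormp : ∀ t : ℝ, ‖Complex.exp (c*(t:ℂ))‖ = Real.exp (μ*t) := by
      intro t
      rw [Complex.norm_exp]
      congr 1
      rw [hcdef]
      simp [Complex.mul_re]
    have hnormm : ∀ t : ℝ, ‖Complex.exp (-c*(t:ℂ))‖ = Real.exp (-(μ*t)) := by
      intro t
      rw [Complex.norm_exp]
      congr 1
      rw [hcdef]
      simp [Complex.mul_re]
    -- b = 0 by square integrability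
    have hbzero : b = 0 := by
      by_contra hbne
      have hblow : ∀ t : ℝ, 1 ≤ t → ‖b‖ * Real.exp (μ*t) - ‖a‖ ≤ ‖g t‖ := by
        intro t ht
        have htpos : (0:ℝ) < t := lt_of_lt_of_le one_pos ht
        have h1 : ‖b * Complex.exp (c*(t:ℂ))‖
            ≤ ‖g t‖ + ‖a * Complex.exp (-c*(t:ℂ))‖ := by
          have : b * Complex.exp (c*(t:ℂ))
              = g t - a * Complex.exp (-c*(t:ℂ)) := by
            rw [hab t htpos]; ring
          rw [this]
          exact norm_sub_le _ _
        have h2 : ‖a * Complex.exp (-c*(t:ℂ))‖ ≤ ‖a‖ := by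
          rw [norm_mul, hnormm]
          have : Real.exp (-(μ*t)) ≤ 1 := by
            rw [show (1:ℝ) = Real.exp 0 by rw [Real.exp_zero]]
            apply Real.exp_le_exp.mpr
            nlinarith [hμpos]
          nlinarith [norm_nonneg a]
        rw [norm_mul, hnormp] at h1
        linarith
      have htend : Tendsto (fun t : ℝ => ‖b‖ * Real.exp (μ*t) - ‖a‖) atTop atTop := by
        have h1 : Tendsto (fun t : ℝ => μ * t) atTop atTop :=
          Tendsto.const_mul_atTop hμpos tendsto_id
        have h2 : Tendsto (fun t : ℝ => Real.exp (μ*t)) atTop atTop :=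
          Real.tendsto_exp_atTop.comp h1
        have h3 : Tendsto (fun t : ℝ => ‖b‖ * Real.exp (μ*t)) atTop atTop :=
          Tendsto.const_mul_atTop (norm_pos_iff.mpr hbne) h2
        simpa [sub_eq_add_neg] using tendsto_atTop_add_const_right atTop (-‖a‖) h3
      obtain ⟨T, hT⟩ := Filter.eventually_atTop.mp (htend.eventually_ge_atTop (2*π + 1))
      -- integrability of the θ-integral of ‖W‖²
      have hprod : Integrable (fun p : ℝ × ℝ => ‖W p‖^2)
          ((volume.restrict (Set.Ioi (0:ℝ))).prod (volume.restrict (Set.Ioo (0:ℝ) (2*π)))) := by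
        rw [Measure.prod_restrict, ← MeasureTheory.Measure.volume_eq_prod]
        exact hWL2
      have hint : Integrable (fun t => ∫ θ, ‖W (t, θ)‖^2 ∂(volume.restrict (Set.Ioo (0:ℝ) (2*π))))
          (volume.restrict (Set.Ioi (0:ℝ))) := hprod.integral_prod_left
      have hlow : ∀ t : ℝ, max T 1 ≤ t →
          1 ≤ ∫ θ in Set.Ioo (0:ℝ) (2*π), ‖W (t, θ)‖^2 := by
        intro t ht'
        have ht1' : (1:ℝ) ≤ t := le_trans (le_max_right _ _) ht'
        have htpos : (0:ℝ) < t := lt_of_lt_of_le one_pos ht1'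
        have hcs : Continuous (fun θ => W (t, θ)) := hslice t htpos.le
        have hi1 : IntegrableOn (fun θ => ‖W (t, θ)‖) (Set.Ioo (0:ℝ) (2*π)) :=
          (hcs.norm.integrableOn_Icc).mono_set Set.Ioo_subset_Icc_self
        have hi2 : IntegrableOn (fun θ => ‖W (t, θ)‖^2) (Set.Ioo (0:ℝ) (2*π)) :=
          ((hcs.norm.pow 2).integrableOn_Icc).mono_set Set.Ioo_subset_Icc_self
        have c1 : ‖g t‖ ≤ ∫ θ in Set.Ioo (0:ℝ) (2*π), ‖W (t, θ)‖ := by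
          have hn : ‖∫ θ in (0:ℝ)..2*π, W (t, θ) * E θ‖
              ≤ ∫ θ in (0:ℝ)..2*π, ‖W (t, θ) * E θ‖ :=
            intervalIntegral.norm_integral_le_integral_norm (by positivity)
          have he : (∫ θ in (0:ℝ)..2*π, ‖W (t, θ) * E θ‖)
              = ∫ θ in (0:ℝ)..2*π, ‖W (t, θ)‖ :=
            intervalIntegral.integral_congr (fun θ _ => by rw [norm_mul, hEnorm, mul_one])
          have hoi : (∫ θ in (0:ℝ)..2*π, ‖W (t, θ)‖)
              = ∫ θ in Set.Ioo (0:ℝ) (2*π), ‖W (t, θ)‖ := by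
            rw [intervalIntegral.integral_of_le (by positivity : (0:ℝ) ≤ 2*π),
              MeasureTheory.integral_Ioc_eq_integral_Ioo]
          calc ‖g t‖ ≤ ∫ θ in (0:ℝ)..2*π, ‖W (t, θ) * E θ‖ := hn
          _ = ∫ θ in Set.Ioo (0:ℝ) (2*π), ‖W (t, θ)‖ := by rw [he, hoi]
        have c2 : (∫ θ in Set.Ioo (0:ℝ) (2*π), ‖W (t, θ)‖)
            ≤ 2*π + ∫ θ in Set.Ioo (0:ℝ) (2*π), ‖W (t, θ)‖^2 := by
          have hmono : (∫ θ in Set.Ioo (0:ℝ) (2*π), ‖W (t, θ)‖)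
              ≤ ∫ θ in Set.Ioo (0:ℝ) (2*π), (1 + ‖W (t, θ)‖^2) := by
            refine setIntegral_mono_on hi1 (((integrableOn_const_iff (C := (1:ℝ))).mpr ?_).add hi2)
              measurableSet_Ioo (fun θ _ => ?_)
            · right; rw [Real.volume_Ioo]; exact ENNReal.ofReal_lt_top
            · nlinarith [norm_nonneg (W (t, θ))]
          have hadd : (∫ θ in Set.Ioo (0:ℝ) (2*π), (1 + ‖W (t, θ)‖^2))
              = 2*π + ∫ θ in Set.Ioo (0:ℝ) (2*π), ‖W (t, θ)‖^2 := by
            rw [MeasureTheory.integral_add ((integrableOn_const_iff (C := (1:ℝ))).mpr (by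
              right; rw [Real.volume_Ioo]; exact ENNReal.ofReal_lt_top)) hi2]
            congr 1
            rw [MeasureTheory.setIntegral_const, measureReal_def, Real.volume_Ioo, smul_eq_mul, mul_one,
              ENNReal.toReal_ofReal (by nlinarith [Real.pi_pos])]
            ring
          linarith
        have c3 : 2*π + 1 ≤ ‖g t‖ := by
          have := hblow t ht1'
          have h4 := hT t (le_trans (le_max_left _ _) ht')
          linarith
        linarith
      have hfin := hint.measure_ge_lt_top one_pos
      have hsub : Set.Ioi (max T 1) ⊆
          {x : ℝ | 1 ≤ ∫ θ, ‖W (x, θ)‖^2 ∂(volume.restrict (Set.Ioo (0:ℝ) (2*π)))} :=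
        fun x hx => hlow x (le_of_lt hx)
      have h2 : (⊤ : ENNReal) ≤ (volume.restrict (Set.Ioi (0:ℝ)))
          {x : ℝ | 1 ≤ ∫ θ, ‖W (x, θ)‖^2 ∂(volume.restrict (Set.Ioo (0:ℝ) (2*π)))} := by
        calc (⊤ : ENNReal) = volume (Set.Ioi (max T 1)) := (Real.volume_Ioi).symm
        _ = (volume.restrict (Set.Ioi (0:ℝ))) (Set.Ioi (max T 1)) := by
            rw [Measure.restrict_apply measurableSet_Ioi,
              Set.inter_eq_self_of_subset_left (Set.Ioi_subset_Ioi (le_trans zero_le_one (le_max_right T 1)))]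
        _ ≤ _ := measure_mono hsub
      rw [top_le_iff] at h2
      rw [h2] at hfin
      exact lt_irrefl _ hfin
    -- a = 0 by continuity at t = 0
    have hcont0 : ContinuousWithinAt g (Set.Ici (0:ℝ)) 0 := by
      have hsub0 : Set.Icc (0:ℝ) 1 ×ˢ Set.Icc (-(2*π)) (2*π) ⊆
          Set.Ici (0:ℝ) ×ˢ (Set.univ : Set ℝ) := by
        rintro ⟨x, y⟩ ⟨hx, _⟩
        exact ⟨hx.1, Set.mem_univ _⟩
      obtain ⟨C₀, hC₀⟩ := (isCompact_Icc.prod isCompact_Icc :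
          IsCompact (Set.Icc (0:ℝ) 1 ×ˢ Set.Icc (-(2*π)) (2*π))).exists_bound_of_continuousOn
        (hWc.mono hsub0)
      refine intervalIntegral.continuousWithinAt_of_dominated_interval
        (F := fun x θ => W (x, θ) * E θ) (bound := fun _ => C₀) ?_ ?_ intervalIntegrable_const ?_
      · filter_upwards [self_mem_nhdsWithin] with x hx
        exact ((hslice x hx).mul hEc).aestronglyMeasurable
      · have hmem1 : Set.Iio (1:ℝ) ∈ nhdsWithin (0:ℝ) (Set.Ici 0) :=
          nhdsWithin_le_nhds (Iio_mem_nhds one_pos)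
        filter_upwards [self_mem_nhdsWithin, hmem1] with x hx hx1
        refine Filter.Eventually.of_forall (fun θ hθ => ?_)
        have hθ' : θ ∈ Set.Icc (-(2*π)) (2*π) := by
          rw [Set.uIoc_of_le (by positivity : (0:ℝ) ≤ 2*π)] at hθ
          exact ⟨by linarith [hθ.1, Real.pi_pos], hθ.2⟩
        have := hC₀ (x, θ) ⟨⟨hx, le_of_lt hx1⟩, hθ'⟩
        calc ‖W (x, θ) * E θ‖ = ‖W (x, θ)‖ := by rw [norm_mul, hEnorm, mul_one]
        _ ≤ C₀ := this
      · refine Filter.Eventually.of_forall (fun θ _ => ?_)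
        have hcw : ContinuousOn (fun x => W (x, θ)) (Set.Ici (0:ℝ)) :=
          hWc.comp ((continuous_id.prodMk continuous_const).continuousOn)
            (fun x hx => ⟨hx, Set.mem_univ _⟩)
        exact (hcw.continuousWithinAt Set.self_mem_Ici).mul continuousWithinAt_const
    have hazero : a = 0 := by
      have hlim1 : Tendsto g (nhdsWithin (0:ℝ) (Set.Ioi 0)) (nhds 0) := by
        have h := hcont0.tendsto
        rw [hg0] at h
        exact h.mono_left (nhdsWithin_mono _ Set.Ioi_subset_Ici_self)
      have hcont2 : Continuous (fun t : ℝ => a * Complex.exp (-c*t) + b * Complex.exp (c*t)) := by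
        exact ((continuous_const.mul (Complex.continuous_exp.comp
          (continuous_const.mul Complex.continuous_ofReal))).add
          (continuous_const.mul (Complex.continuous_exp.comp
            (continuous_const.mul Complex.continuous_ofReal))))
      have hlim2 : Tendsto (fun t : ℝ => a * Complex.exp (-c*t) + b * Complex.exp (c*t))
          (nhdsWithin (0:ℝ) (Set.Ioi 0)) (nhds (a + b)) := by
        have := (hcont2.tendsto 0).mono_left (nhdsWithin_le_nhds (s := Set.Ioi (0:ℝ)))
        simpa using this
      have hlim2' : Tendsto g (nhdsWithin (0:ℝ) (Set.Ioi 0)) (nhds (a + b)) := by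
        refine hlim2.congr' ?_
        filter_upwards [self_mem_nhdsWithin] with x hx
        exact (hab x hx).symm
      have : a + b = 0 := tendsto_nhds_unique hlim2' hlim1
      rw [hbzero] at this
      simpa using this
    intro t ht
    rcases eq_or_lt_of_le ht with h | h
    · have : g 0 = 0 := hg0
      rw [← h]
      exact this
    · have := hab t h
      rw [hazero, hbzero] at this
      simpa using this
  intro t θ ht
  exact fourier_unique (hslice t ht) (fun φ => hWper t φ) (fun k => key k t ht) θ

private lemma pde_bridge (lam : ℝ) {G : ℝ → ℝ → ℂ}
    (hG2 : ContDiffOn ℝ 2 (fun p : ℝ × ℝ => G p.1 p.2) (Set.Ioi 0 ×ˢ (Set.univ : Set ℝ)))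
    (hpde : ∀ t θ : ℝ, 0 < t →
        deriv (fun s : ℝ => deriv (fun s' : ℝ => G s' θ) s) t +
          deriv (fun φ : ℝ => deriv (fun φ' : ℝ => G t φ') φ) θ = (lam : ℂ) * G t θ) :
    ∀ t θ : ℝ, 0 < t →
      fderiv ℝ (fun q : ℝ × ℝ => fderiv ℝ (fun r : ℝ × ℝ => G r.1 r.2) q (1, 0)) (t, θ) (1, 0) +
        fderiv ℝ (fun q : ℝ × ℝ => fderiv ℝ (fun r : ℝ × ℝ => G r.1 r.2) q (0, 1)) (t, θ) (0, 1) =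
      (lam : ℂ) * G t θ := by
  have hΩ : IsOpen (Set.Ioi (0:ℝ) ×ˢ (Set.univ : Set ℝ)) := isOpen_Ioi.prod isOpen_univ
  have hmem : ∀ {p : ℝ × ℝ}, 0 < p.1 → p ∈ Set.Ioi (0:ℝ) ×ˢ (Set.univ : Set ℝ) :=
    fun h => ⟨h, Set.mem_univ _⟩
  set F : ℝ × ℝ → ℂ := fun p => G p.1 p.2 with hF
  have hd : ∀ p : ℝ × ℝ, 0 < p.1 → HasFDerivAt F (fderiv ℝ F p) p := fun p hp =>
    ((hG2.differentiableOn (by norm_num)).differentiableAt (hΩ.mem_nhds (hmem hp))).hasFDerivAt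
  have hfd : ContDiffOn ℝ 1 (fderiv ℝ F) (Set.Ioi (0:ℝ) ×ˢ (Set.univ : Set ℝ)) :=
    hG2.fderiv_of_isOpen hΩ (by norm_num)
  have hF1 : ContDiffOn ℝ 1 (fun q => fderiv ℝ F q (1, 0))
      (Set.Ioi (0:ℝ) ×ˢ (Set.univ : Set ℝ)) :=
    (ContinuousLinearMap.apply ℝ ℂ ((1:ℝ), (0:ℝ))).contDiff.comp_contDiffOn hfd
  have hFθ : ContDiffOn ℝ 1 (fun q => fderiv ℝ F q (0, 1))
      (Set.Ioi (0:ℝ) ×ˢ (Set.univ : Set ℝ)) :=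
    (ContinuousLinearMap.apply ℝ ℂ ((0:ℝ), (1:ℝ))).contDiff.comp_contDiffOn hfd
  have hd1 : ∀ p : ℝ × ℝ, 0 < p.1 →
      HasFDerivAt (fun q => fderiv ℝ F q (1, 0)) (fderiv ℝ (fun q => fderiv ℝ F q (1, 0)) p) p :=
    fun p hp =>
    ((hF1.differentiableOn one_ne_zero).differentiableAt (hΩ.mem_nhds (hmem hp))).hasFDerivAt
  have hdθ : ∀ p : ℝ × ℝ, 0 < p.1 →
      HasFDerivAt (fun q => fderiv ℝ F q (0, 1)) (fderiv ℝ (fun q => fderiv ℝ F q (0, 1)) p) p :=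
    fun p hp =>
    ((hFθ.differentiableOn one_ne_zero).differentiableAt (hΩ.mem_nhds (hmem hp))).hasFDerivAt
  intro t θ hp
  have e2 : deriv (fun s => deriv (fun s' : ℝ => G s' θ) s) t
      = fderiv ℝ (fun q => fderiv ℝ F q (1, 0)) (t, θ) (1, 0) := by
    have hev : (fun s => deriv (fun s' : ℝ => G s' θ) s)
        =ᶠ[nhds t] fun s => fderiv ℝ F (s, θ) (1, 0) := by
      filter_upwards [Ioi_mem_nhds hp] with s hs
      exact (hderiv_fst (hd (s, θ) hs)).deriv
    rw [hev.deriv_eq]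
    exact (hderiv_fst (hd1 (t, θ) hp)).deriv
  have e5 : deriv (fun φ => deriv (fun φ' : ℝ => G t φ') φ) θ
      = fderiv ℝ (fun q => fderiv ℝ F q (0, 1)) (t, θ) (0, 1) := by
    have h4 : (fun φ => deriv (fun φ' : ℝ => G t φ') φ) = fun φ => fderiv ℝ F (t, φ) (0, 1) :=
      funext fun φ => (hderiv_snd (hd (t, φ) hp)).deriv
    rw [h4]
    exact (hderiv_snd (hdθ (t, θ) hp)).deriv
  rw [← e2, ← e5]
  exact hpde t θ hp


private noncomputable def cc (lam : ℝ) (k : ℤ) : ℂ := -((Real.sqrt ((k:ℝ)^2 + lam) : ℝ) : ℂ)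
private noncomputable def dd (k : ℤ) : ℂ := (k:ℂ) * Complex.I

private lemma cc_sq (lam : ℝ) (hlam : 0 < lam) (k : ℤ) :
    (cc lam k)^2 = (((k:ℝ)^2 + lam : ℝ) : ℂ) := by
  have h : (0:ℝ) < (k:ℝ)^2 + lam := by positivity
  rw [cc, neg_pow, ← Complex.ofReal_pow, Real.sq_sqrt h.le]
  ring

private lemma dd_sq (k : ℤ) : (dd k)^2 = -((k:ℂ)^2) := by
  rw [dd]; ring_nf; rw [Complex.I_sq]; ring

private lemma dd_norm (k : ℤ) (θ : ℝ) : ‖Complex.exp (dd k * θ)‖ = 1 := by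
  have h0 : dd k * (θ:ℂ) = ((((k:ℝ) * θ : ℝ)) : ℂ) * Complex.I := by rw [dd]; push_cast; ring
  rw [h0, Complex.norm_exp_ofReal_mul_I]



/-- Dirichlet-to-Neumann map of `Δ + λ` on the half-infinite cylinder: the unique
square-integrable solution of `∂ₜ²u + ∂_θ²u = λu` with boundary datum
`f(θ) = Σ_{|k|≤N} f_k e^{ikθ}` is `u(t,θ) = Σ f_k e^{−t√(k²+λ)} e^{ikθ}`, and
`−∂ₜu(0,·)` is the Fourier multiplier by `√(k²+λ)` applied to `f`. -/
theorem halfCylinder_DN_solution (lam : ℝ) (hlam : 0 < lam) (N : ℕ) (f : ℤ → ℂ)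
    (u : ℝ → ℝ → ℂ)
    (hu : ∀ t θ : ℝ, u t θ = ∑ k ∈ Finset.Icc (-(N : ℤ)) (N : ℤ),
      f k * Complex.exp (-((t * Real.sqrt ((k : ℝ) ^ 2 + lam) : ℝ) : ℂ)) *
        Complex.exp (((k : ℝ) * θ : ℝ) * Complex.I)) :
    -- (i) smoothness and the PDE
    (ContDiff ℝ (⊤ : ℕ∞) (fun p : ℝ × ℝ => u p.1 p.2) ∧
      ∀ t θ : ℝ, 0 < t →
        deriv (fun s : ℝ => deriv (fun s' : ℝ => u s' θ) s) t +
          deriv (fun φ : ℝ => deriv (fun φ' : ℝ => u t φ') φ) θ = (lam : ℂ) * u t θ) ∧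
    -- (ii) boundary value
    (∀ θ : ℝ, u 0 θ = ∑ k ∈ Finset.Icc (-(N : ℤ)) (N : ℤ),
      f k * Complex.exp (((k : ℝ) * θ : ℝ) * Complex.I)) ∧
    -- (iii) square integrability
    MeasureTheory.IntegrableOn (fun p : ℝ × ℝ => ‖u p.1 p.2‖ ^ 2)
      (Set.Ioi (0 : ℝ) ×ˢ Set.Ioo (0 : ℝ) (2 * Real.pi)) ∧
    -- (iv) the Dirichlet-to-Neumann map
    (∀ θ : ℝ, -(deriv (fun t : ℝ => u t θ) 0) =
      ∑ k ∈ Finset.Icc (-(N : ℤ)) (N : ℤ),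
        ((Real.sqrt ((k : ℝ) ^ 2 + lam) : ℝ) : ℂ) * f k *
          Complex.exp (((k : ℝ) * θ : ℝ) * Complex.I)) ∧
    -- (v) uniqueness
    (∀ v : ℝ → ℝ → ℂ,
      ContinuousOn (fun p : ℝ × ℝ => v p.1 p.2) (Set.Ici (0 : ℝ) ×ˢ (Set.univ : Set ℝ)) →
      (∀ t θ : ℝ, v t (θ + 2 * Real.pi) = v t θ) →
      ContDiffOn ℝ 2 (fun p : ℝ × ℝ => v p.1 p.2) (Set.Ioi (0 : ℝ) ×ˢ (Set.univ : Set ℝ)) →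
      MeasureTheory.IntegrableOn (fun p : ℝ × ℝ => ‖v p.1 p.2‖ ^ 2)
        (Set.Ioi (0 : ℝ) ×ˢ Set.Ioo (0 : ℝ) (2 * Real.pi)) →
      (∀ t θ : ℝ, 0 < t →
        deriv (fun s : ℝ => deriv (fun s' : ℝ => v s' θ) s) t +
          deriv (fun φ : ℝ => deriv (fun φ' : ℝ => v t φ') φ) θ = (lam : ℂ) * v t θ) →
      (∀ θ : ℝ, v 0 θ = ∑ k ∈ Finset.Icc (-(N : ℤ)) (N : ℤ),
        f k * Complex.exp (((k : ℝ) * θ : ℝ) * Complex.I)) →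
      ∀ t θ : ℝ, 0 ≤ t → v t θ = u t θ) := by
  have hterm2 : ∀ (k : ℤ) (t : ℝ),
      Complex.exp (-((t * Real.sqrt ((k : ℝ) ^ 2 + lam) : ℝ) : ℂ))
        = Complex.exp (cc lam k * t) := by
    intro k t; rw [cc]; congr 1; push_cast; ring
  have hterm3 : ∀ (k : ℤ) (θ : ℝ),
      Complex.exp (((k : ℝ) * θ : ℝ) * Complex.I) = Complex.exp (dd k * θ) := by
    intro k θ; rw [dd]; congr 1; push_cast; ring
  have huS : ∀ t θ : ℝ, u t θ = ∑ k ∈ Finset.Icc (-(N : ℤ)) (N : ℤ),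
      f k * Complex.exp (cc lam k * t) * Complex.exp (dd k * θ) := by
    intro t θ; rw [hu]
    exact Finset.sum_congr rfl (fun k _ => by rw [hterm2, hterm3])
  -- (i) smoothness
  have hsmooth : ContDiff ℝ (⊤ : ℕ∞) (fun p : ℝ × ℝ => u p.1 p.2) := by
    have he : (fun p : ℝ × ℝ => u p.1 p.2) = fun p : ℝ × ℝ =>
        ∑ k ∈ Finset.Icc (-(N : ℤ)) (N : ℤ),
          f k * Complex.exp (cc lam k * p.1) * Complex.exp (dd k * p.2) :=
      funext fun p => huS p.1 p.2
    rw [he]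
    refine ContDiff.sum (fun k _ => ?_)
    have h1 : ContDiff ℝ (⊤ : ℕ∞) (fun p : ℝ × ℝ => Complex.exp (cc lam k * p.1)) :=
      Complex.contDiff_exp.comp (contDiff_const.mul (Complex.ofRealCLM.contDiff.comp contDiff_fst))
    have h2 : ContDiff ℝ (⊤ : ℕ∞) (fun p : ℝ × ℝ => Complex.exp (dd k * p.2)) :=
      Complex.contDiff_exp.comp (contDiff_const.mul (Complex.ofRealCLM.contDiff.comp contDiff_snd))
    exact (contDiff_const.mul h1).mul h2
  -- first and second partial derivatives of u
  have hd1 : ∀ (θ s : ℝ), deriv (fun s' : ℝ => u s' θ) s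
      = ∑ k ∈ Finset.Icc (-(N : ℤ)) (N : ℤ),
        f k * (cc lam k * Complex.exp (cc lam k * s)) * Complex.exp (dd k * θ) := by
    intro θ s
    have he : (fun s' : ℝ => u s' θ) = fun s' : ℝ =>
        ∑ k ∈ Finset.Icc (-(N : ℤ)) (N : ℤ),
          f k * Complex.exp (cc lam k * s') * Complex.exp (dd k * θ) :=
      funext fun s' => huS s' θ
    rw [he]
    exact (HasDerivAt.fun_sum (fun k _ =>
      ((hderiv_cexp (cc lam k) s).const_mul (f k)).mul_const _)).deriv
  have hd2 : ∀ (θ t : ℝ), deriv (fun s : ℝ => deriv (fun s' : ℝ => u s' θ) s) t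
      = ∑ k ∈ Finset.Icc (-(N : ℤ)) (N : ℤ),
        f k * (cc lam k * (cc lam k * Complex.exp (cc lam k * t))) * Complex.exp (dd k * θ) := by
    intro θ t
    rw [funext (hd1 θ)]
    exact (HasDerivAt.fun_sum (fun k _ =>
      (((hderiv_cexp (cc lam k) t).const_mul (cc lam k)).const_mul (f k)).mul_const _)).deriv
  have hdθ1 : ∀ (t φ : ℝ), deriv (fun φ' : ℝ => u t φ') φ
      = ∑ k ∈ Finset.Icc (-(N : ℤ)) (N : ℤ),
        f k * Complex.exp (cc lam k * t) * (dd k * Complex.exp (dd k * φ)) := by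
    intro t φ
    have he : (fun φ' : ℝ => u t φ') = fun φ' : ℝ =>
        ∑ k ∈ Finset.Icc (-(N : ℤ)) (N : ℤ),
          f k * Complex.exp (cc lam k * t) * Complex.exp (dd k * φ') :=
      funext fun φ' => huS t φ'
    rw [he]
    exact (HasDerivAt.fun_sum (fun k _ =>
      (hderiv_cexp (dd k) φ).const_mul (f k * Complex.exp (cc lam k * t)))).deriv
  have hdθ2 : ∀ (t θ : ℝ), deriv (fun φ : ℝ => deriv (fun φ' : ℝ => u t φ') φ) θ
      = ∑ k ∈ Finset.Icc (-(N : ℤ)) (N : ℤ),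
        f k * Complex.exp (cc lam k * t) * (dd k * (dd k * Complex.exp (dd k * θ))) := by
    intro t θ
    rw [funext (hdθ1 t)]
    exact (HasDerivAt.fun_sum (fun k _ =>
      ((hderiv_cexp (dd k) θ).const_mul (dd k)).const_mul
        (f k * Complex.exp (cc lam k * t)))).deriv
  -- the PDE for u (at every point)
  have hpdeu : ∀ t θ : ℝ,
      deriv (fun s : ℝ => deriv (fun s' : ℝ => u s' θ) s) t +
        deriv (fun φ : ℝ => deriv (fun φ' : ℝ => u t φ') φ) θ = (lam : ℂ) * u t θ := by
    intro t θ
    rw [hd2, hdθ2, huS, Finset.mul_sum, ← Finset.sum_add_distrib]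
    refine Finset.sum_congr rfl (fun k _ => ?_)
    have h1 := cc_sq lam hlam k
    have h2 := dd_sq k
    have h3 : (((k:ℝ)^2 + lam : ℝ) : ℂ) = (k:ℂ)^2 + (lam : ℂ) := by push_cast; ring
    linear_combination (f k * Complex.exp (cc lam k * t) * Complex.exp (dd k * θ)) * h1
      + (f k * Complex.exp (cc lam k * t) * Complex.exp (dd k * θ)) * h2
      + (f k * Complex.exp (cc lam k * t) * Complex.exp (dd k * θ)) * h3
  -- (ii) boundary value
  have hbd : ∀ θ : ℝ, u 0 θ = ∑ k ∈ Finset.Icc (-(N : ℤ)) (N : ℤ),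
      f k * Complex.exp (((k : ℝ) * θ : ℝ) * Complex.I) := by
    intro θ
    rw [hu]
    refine Finset.sum_congr rfl (fun k _ => ?_)
    norm_num
  -- (iii) square-integrability
  have hbound : ∀ t θ : ℝ, 0 ≤ t → ‖u t θ‖
      ≤ (∑ k ∈ Finset.Icc (-(N : ℤ)) (N : ℤ), ‖f k‖) * Real.exp (-Real.sqrt lam * t) := by
    intro t θ ht
    rw [huS]
    calc ‖∑ k ∈ Finset.Icc (-(N : ℤ)) (N : ℤ),
        f k * Complex.exp (cc lam k * t) * Complex.exp (dd k * θ)‖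
        ≤ ∑ k ∈ Finset.Icc (-(N : ℤ)) (N : ℤ),
          ‖f k * Complex.exp (cc lam k * t) * Complex.exp (dd k * θ)‖ := norm_sum_le _ _
      _ ≤ ∑ k ∈ Finset.Icc (-(N : ℤ)) (N : ℤ), ‖f k‖ * Real.exp (-Real.sqrt lam * t) := by
          refine Finset.sum_le_sum (fun k _ => ?_)
          rw [norm_mul, norm_mul, dd_norm, mul_one]
          have he : ‖Complex.exp (cc lam k * t)‖
              = Real.exp (-Real.sqrt ((k:ℝ)^2 + lam) * t) := by
            rw [Complex.norm_exp, cc]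
            congr 1
            simp [Complex.mul_re]
          rw [he]
          have hs : Real.sqrt lam ≤ Real.sqrt ((k:ℝ)^2 + lam) :=
            Real.sqrt_le_sqrt (by nlinarith [sq_nonneg ((k:ℝ))])
          have : Real.exp (-Real.sqrt ((k:ℝ)^2 + lam) * t) ≤ Real.exp (-Real.sqrt lam * t) :=
            Real.exp_le_exp.mpr (by nlinarith)
          exact mul_le_mul_of_nonneg_left this (norm_nonneg _)
      _ = (∑ k ∈ Finset.Icc (-(N : ℤ)) (N : ℤ), ‖f k‖) * Real.exp (-Real.sqrt lam * t) := by
          rw [Finset.sum_mul]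
  have hint3 : MeasureTheory.IntegrableOn (fun p : ℝ × ℝ => ‖u p.1 p.2‖ ^ 2)
      (Set.Ioi (0 : ℝ) ×ˢ Set.Ioo (0 : ℝ) (2 * Real.pi)) := by
    set C : ℝ := ∑ k ∈ Finset.Icc (-(N : ℤ)) (N : ℤ), ‖f k‖ with hC
    have hgint : MeasureTheory.IntegrableOn
        (fun p : ℝ × ℝ => C^2 * Real.exp (-(2 * Real.sqrt lam) * p.1))
        (Set.Ioi (0 : ℝ) ×ˢ Set.Ioo (0 : ℝ) (2 * Real.pi)) := by
      have h1 : Integrable (fun t : ℝ => C^2 * Real.exp (-(2 * Real.sqrt lam) * t))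
          (volume.restrict (Set.Ioi (0:ℝ))) :=
        (exp_neg_integrableOn_Ioi 0 (by positivity)).const_mul _
      have h2 : Integrable (fun _ : ℝ => (1:ℝ)) (volume.restrict (Set.Ioo (0:ℝ) (2*π))) := by
        refine (integrableOn_const_iff (C := (1:ℝ))).mpr (Or.inr ?_)
        rw [Real.volume_Ioo]; exact ENNReal.ofReal_lt_top
      have h3 := h1.mul_prod h2
      rw [Measure.prod_restrict, ← MeasureTheory.Measure.volume_eq_prod] at h3
      simpa [IntegrableOn] using h3
    refine Integrable.mono' hgint ?_ ?_
    · exact (((hsmooth.continuous).norm.pow 2).aestronglyMeasurable).restrict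
    · rw [ae_restrict_iff' (measurableSet_Ioi.prod measurableSet_Ioo)]
      refine Filter.Eventually.of_forall (fun p hp => ?_)
      have hb := hbound p.1 p.2 (le_of_lt hp.1)
      have hx : Real.exp (-(2 * Real.sqrt lam) * p.1)
          = (Real.exp (-Real.sqrt lam * p.1))^2 := by
        rw [show -(2 * Real.sqrt lam) * p.1 = (-Real.sqrt lam * p.1) + (-Real.sqrt lam * p.1)
          by ring, Real.exp_add, sq]
      rw [Real.norm_eq_abs, abs_of_nonneg (by positivity)]
      rw [hx]
      nlinarith [norm_nonneg (u p.1 p.2), Real.exp_pos (-Real.sqrt lam * p.1)]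
  -- (iv)
  have hDN : ∀ θ : ℝ, -(deriv (fun t : ℝ => u t θ) 0) =
      ∑ k ∈ Finset.Icc (-(N : ℤ)) (N : ℤ),
        ((Real.sqrt ((k : ℝ) ^ 2 + lam) : ℝ) : ℂ) * f k *
          Complex.exp (((k : ℝ) * θ : ℝ) * Complex.I) := by
    intro θ
    have h0 : (fun t : ℝ => u t θ) = fun s' : ℝ => u s' θ := rfl
    rw [h0, hd1 θ 0, ← Finset.sum_neg_distrib]
    refine Finset.sum_congr rfl (fun k _ => ?_)
    rw [hterm3]
    rw [show ((0:ℝ):ℂ) = 0 from Complex.ofReal_zero, mul_zero, Complex.exp_zero, cc]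
    ring
  -- (v) uniqueness
  refine ⟨⟨hsmooth, fun t θ _ => hpdeu t θ⟩, hbd, hint3, hDN, ?_⟩
  intro v hvc hvper hvC2 hvL2 hvpde hvbd
  have hΩ : IsOpen (Set.Ioi (0:ℝ) ×ˢ (Set.univ : Set ℝ)) := isOpen_Ioi.prod isOpen_univ
  have huper : ∀ t θ : ℝ, u t (θ + 2*π) = u t θ := by
    intro t θ
    rw [huS, huS]
    refine Finset.sum_congr rfl (fun k _ => ?_)
    congr 1
    have h1 : dd k * ((θ + 2*π : ℝ) : ℂ) = dd k * θ + dd k * ((2*π : ℝ) : ℂ) := by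
      push_cast; ring
    have h2 : Complex.exp (dd k * ((2*π:ℝ) : ℂ)) = 1 := by
      rw [show dd k * ((2*π:ℝ):ℂ) = (k : ℂ) * (2*π*Complex.I) by rw [dd]; push_cast; ring]
      exact_mod_cast Complex.exp_int_mul_two_pi_mul_I k
    rw [h1, Complex.exp_add, h2, mul_one]
  have hucd2 : ContDiffOn ℝ 2 (fun p : ℝ × ℝ => u p.1 p.2)
      (Set.Ioi (0:ℝ) ×ˢ (Set.univ : Set ℝ)) := (hsmooth.of_le (by exact (WithTop.coe_le_coe (b := ((2:ℕ):ℕ∞)) (a := ⊤)).mpr le_top)).contDiffOn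
  -- the difference W
  have hWc : ContinuousOn (fun p : ℝ × ℝ => v p.1 p.2 - u p.1 p.2)
      (Set.Ici (0:ℝ) ×ˢ (Set.univ : Set ℝ)) :=
    hvc.sub (hsmooth.continuous.continuousOn)
  have hW2 : ContDiffOn ℝ 2 (fun p : ℝ × ℝ => v p.1 p.2 - u p.1 p.2)
      (Set.Ioi (0:ℝ) ×ˢ (Set.univ : Set ℝ)) := hvC2.sub hucd2
  have hWper : ∀ t θ : ℝ, (fun p : ℝ × ℝ => v p.1 p.2 - u p.1 p.2) (t, θ + 2*π)
      = (fun p : ℝ × ℝ => v p.1 p.2 - u p.1 p.2) (t, θ) := by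
    intro t θ
    simp only
    rw [hvper, huper]
  have hWL2 : MeasureTheory.IntegrableOn
      (fun p : ℝ × ℝ => ‖(fun q : ℝ × ℝ => v q.1 q.2 - u q.1 q.2) p‖ ^ 2)
      (Set.Ioi (0:ℝ) ×ˢ Set.Ioo 0 (2*π)) := by
    have hsum := (hvL2.add hint3).const_mul (2:ℝ)
    refine Integrable.mono' hsum ?_ ?_
    · have hsubset : (Set.Ioi (0:ℝ) ×ˢ Set.Ioo (0:ℝ) (2*π))
          ⊆ Set.Ici (0:ℝ) ×ˢ (Set.univ : Set ℝ) := by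
        rintro ⟨x, y⟩ ⟨hx, _⟩
        exact ⟨Set.mem_Ici.mpr (le_of_lt hx), Set.mem_univ _⟩
      exact ((hWc.mono hsubset).norm.pow 2).aestronglyMeasurable
        (measurableSet_Ioi.prod measurableSet_Ioo)
    · refine Filter.Eventually.of_forall (fun p => ?_)
      simp only [Pi.add_apply]
      rw [Real.norm_eq_abs, abs_of_nonneg (by positivity)]
      have h1 : ‖v p.1 p.2 - u p.1 p.2‖ ≤ ‖v p.1 p.2‖ + ‖u p.1 p.2‖ := norm_sub_le _ _
      nlinarith [mul_self_le_mul_self (norm_nonneg (v p.1 p.2 - u p.1 p.2)) h1,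
        sq_nonneg (‖v p.1 p.2‖ - ‖u p.1 p.2‖)]
  have hW0 : ∀ θ : ℝ, (fun p : ℝ × ℝ => v p.1 p.2 - u p.1 p.2) (0, θ) = 0 := by
    intro θ
    simp only
    rw [hvbd θ, hbd θ, sub_self]
  -- the PDE for W, in fderiv form
  have hbv := pde_bridge lam hvC2 hvpde
  have hbu := pde_bridge lam hucd2 (fun t θ _ => hpdeu t θ)
  have hWpde : ∀ t θ : ℝ, 0 < t →
      fderiv ℝ (fun q => fderiv ℝ (fun p : ℝ × ℝ => v p.1 p.2 - u p.1 p.2) q (1, 0)) (t, θ) (1, 0) +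
        fderiv ℝ (fun q => fderiv ℝ (fun p : ℝ × ℝ => v p.1 p.2 - u p.1 p.2) q (0, 1)) (t, θ) (0, 1)
        = (lam : ℂ) * (fun p : ℝ × ℝ => v p.1 p.2 - u p.1 p.2) (t, θ) := by
    intro t θ ht
    have hmemΩ : (t, θ) ∈ Set.Ioi (0:ℝ) ×ˢ (Set.univ : Set ℝ) := ⟨ht, Set.mem_univ _⟩
    have hVd : ∀ q : ℝ × ℝ, 0 < q.1 → DifferentiableAt ℝ (fun p : ℝ × ℝ => v p.1 p.2) q :=
      fun q hq => (hvC2.differentiableOn (by norm_num)).differentiableAt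
        (hΩ.mem_nhds ⟨hq, Set.mem_univ _⟩)
    have hUd : ∀ q : ℝ × ℝ, DifferentiableAt ℝ (fun p : ℝ × ℝ => u p.1 p.2) q :=
      fun q => (hsmooth.differentiable (by simp)).differentiableAt
    have hev : ∀ (e : ℝ × ℝ),
        (fun q => fderiv ℝ (fun p : ℝ × ℝ => v p.1 p.2 - u p.1 p.2) q e)
          =ᶠ[nhds (t, θ)] (fun q => fderiv ℝ (fun p : ℝ × ℝ => v p.1 p.2) q e
            - fderiv ℝ (fun p : ℝ × ℝ => u p.1 p.2) q e) := by
      intro e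
      filter_upwards [hΩ.mem_nhds hmemΩ] with q hq
      rw [fderiv_fun_sub (hVd q hq.1) (hUd q)]
      rfl
    have hv1d : DifferentiableAt ℝ
        (fun q => fderiv ℝ (fun p : ℝ × ℝ => v p.1 p.2) q (1, 0)) (t, θ) := by
      have hcd : ContDiffOn ℝ 1 (fun q => fderiv ℝ (fun p : ℝ × ℝ => v p.1 p.2) q (1, 0))
          (Set.Ioi (0:ℝ) ×ˢ (Set.univ : Set ℝ)) :=
        (ContinuousLinearMap.apply ℝ ℂ ((1:ℝ), (0:ℝ))).contDiff.comp_contDiffOn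
          (hvC2.fderiv_of_isOpen hΩ (by norm_num))
      exact (hcd.differentiableOn one_ne_zero).differentiableAt (hΩ.mem_nhds hmemΩ)
    have hvθd : DifferentiableAt ℝ
        (fun q => fderiv ℝ (fun p : ℝ × ℝ => v p.1 p.2) q (0, 1)) (t, θ) := by
      have hcd : ContDiffOn ℝ 1 (fun q => fderiv ℝ (fun p : ℝ × ℝ => v p.1 p.2) q (0, 1))
          (Set.Ioi (0:ℝ) ×ˢ (Set.univ : Set ℝ)) :=
        (ContinuousLinearMap.apply ℝ ℂ ((0:ℝ), (1:ℝ))).contDiff.comp_contDiffOn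
          (hvC2.fderiv_of_isOpen hΩ (by norm_num))
      exact (hcd.differentiableOn one_ne_zero).differentiableAt (hΩ.mem_nhds hmemΩ)
    have hu1d : DifferentiableAt ℝ
        (fun q => fderiv ℝ (fun p : ℝ × ℝ => u p.1 p.2) q (1, 0)) (t, θ) := by
      have hcd : ContDiff ℝ 1 (fun q => fderiv ℝ (fun p : ℝ × ℝ => u p.1 p.2) q (1, 0)) :=
        (ContinuousLinearMap.apply ℝ ℂ ((1:ℝ), (0:ℝ))).contDiff.comp
          (hsmooth.fderiv_right (by exact (WithTop.coe_le_coe (b := ((1+1:ℕ):ℕ∞)) (a := ⊤)).mpr le_top))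
      exact (hcd.differentiable one_ne_zero).differentiableAt
    have huθd : DifferentiableAt ℝ
        (fun q => fderiv ℝ (fun p : ℝ × ℝ => u p.1 p.2) q (0, 1)) (t, θ) := by
      have hcd : ContDiff ℝ 1 (fun q => fderiv ℝ (fun p : ℝ × ℝ => u p.1 p.2) q (0, 1)) :=
        (ContinuousLinearMap.apply ℝ ℂ ((0:ℝ), (1:ℝ))).contDiff.comp
          (hsmooth.fderiv_right (by exact (WithTop.coe_le_coe (b := ((1+1:ℕ):ℕ∞)) (a := ⊤)).mpr le_top))
      exact (hcd.differentiable one_ne_zero).differentiableAt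
    rw [Filter.EventuallyEq.fderiv_eq (hev (1, 0)), Filter.EventuallyEq.fderiv_eq (hev (0, 1))]
    rw [fderiv_fun_sub hv1d hu1d, fderiv_fun_sub hvθd huθd]
    simp only [ContinuousLinearMap.sub_apply]
    have h1 := hbv t θ ht
    have h2 := hbu t θ ht
    linear_combination h1 - h2
  have hvan := vanish_aux lam hlam hWc hWper hW2 hWL2 hWpde hW0
  intro t θ ht
  have h : v t θ - u t θ = 0 := hvan t θ ht
  exact sub_eq_zero.mp h
end

section
/- For λ > 0, the series ζ_λ(s) := (1 + √λ)^{−s} + 2 Σ_{k=1}^∞ (λ + k²)^{−s/2} converges absolutely for Re(s) > 1, and for each λ > 0 there exist ε > 0 and a holomorphic function F_λ on {s ∈ ℂ : Re(s) > −ε} \ {1} agreeing with ζ_λ on {Re(s) > 1}. Moreover the function G(λ) := −F_λ′(0) is differentiable on (0, ∞) with G′(λ) = 1/(2√λ(1 + √λ)) + Σ_{k=1}^∞ 1/(λ + k²). -/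
/-!
Subtracting from the series its value at `λ = 0`, which is `2 ζ(s)`, leaves
`∑ₖ ((λ + (k+1)²)^{-s/2} - (k+1)^{-s})`, whose terms are `O(|s| λ (k+1)^{-2-Re s})` by the mean
value theorem. Hence `F_λ(s) = (1+√λ)^{-s} + 2 ζ(s) + 2 ∑ₖ (…)` is holomorphic on `Re s > -1`
away from the pole of `ζ`, the series may be differentiated termwise at `s = 0`, and
`-F_λ'(0) = log (1+√λ) - 2 ζ'(0) + ∑ₖ (log (λ + (k+1)²) - log ((k+1)²))`,
a series that is differentiated termwise in `λ`.
-/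

open Complex Set

lemma summable_nat_add_one_rpow {p : ℝ} (hp : p < -1) :
    Summable fun k : ℕ => ((k : ℝ) + 1) ^ p := by
  simpa using (summable_nat_add_iff 1).mpr (Real.summable_nat_rpow.mpr hp)

lemma norm_ofReal_cpow_sub_ofReal_cpow_le {a b : ℝ} (hb : 0 < b) (hba : b ≤ a) {w : ℂ}
    (hw : w.re ≤ 1) : ‖(a : ℂ) ^ w - (b : ℂ) ^ w‖ ≤ ‖w‖ * b ^ (w.re - 1) * (a - b) := by
  have hderiv : ∀ t ∈ Icc b a, HasDerivWithinAt (fun t : ℝ => (t : ℂ) ^ w)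
      (w * (t : ℂ) ^ (w - 1)) (Icc b a) t := fun t ht =>
    ((hasStrictDerivAt_cpow_const (ofReal_mem_slitPlane.mpr (hb.trans_le ht.1))).hasDerivAt
      |>.comp_ofReal).hasDerivWithinAt
  have hbound : ∀ t ∈ Icc b a, ‖w * (t : ℂ) ^ (w - 1)‖ ≤ ‖w‖ * b ^ (w.re - 1) := by
    intro t ht
    rw [norm_mul, norm_cpow_eq_rpow_re_of_pos (hb.trans_le ht.1), sub_re, one_re]
    exact mul_le_mul_of_nonneg_left
      (Real.rpow_le_rpow_of_nonpos hb ht.1 (by linarith)) (norm_nonneg w)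
  simpa [Real.norm_eq_abs, abs_of_nonneg (sub_nonneg.mpr hba)] using
    (convex_Icc b a).norm_image_sub_le_of_norm_hasDerivWithin_le hderiv hbound
      (left_mem_Icc.mpr hba) (right_mem_Icc.mpr hba)

lemma hasDerivAt_cpow_zero {c : ℂ} (hc : c ≠ 0) {f : ℂ → ℂ} {f' : ℂ} (hf : HasDerivAt f f' 0)
    (hf0 : f 0 = 0) : HasDerivAt (fun s => c ^ f s) (log c * f') 0 :=
  (hf.const_cpow (Or.inl hc)).congr_deriv (by simp [hf0])

lemma isOpen_re_gt_inter_ball (a W : ℝ) : IsOpen ({s : ℂ | a < s.re} ∩ Metric.ball 0 W) :=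
  (isOpen_lt continuous_const continuous_re).inter Metric.isOpen_ball

lemma ofReal_sq_cpow_half {x : ℝ} (hx : 0 < x) (w : ℂ) :
    ((x ^ 2 : ℝ) : ℂ) ^ (w / 2) = (x : ℂ) ^ w := by
  have him : (log (x : ℂ) * 2).im = 0 := by simp [← ofReal_log hx.le]
  rw [ofReal_pow, ← cpow_ofNat, ← cpow_mul]
  · ring_nf
  all_goals linarith [Real.pi_pos]

namespace DNZeta

noncomputable def term (lam : ℝ) (k : ℕ) (s : ℂ) : ℂ :=
  ((lam + ((k : ℝ) + 1) ^ 2 : ℝ) : ℂ) ^ (-s / 2)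

noncomputable def correction (lam : ℝ) (s : ℂ) : ℂ :=
  ∑' k, (term lam k s - term 0 k s)

noncomputable def continuation (lam : ℝ) (s : ℂ) : ℂ :=
  ((1 + √lam : ℝ) : ℂ) ^ (-s) + 2 * riemannZeta s + 2 * correction lam s

noncomputable def logSum (lam : ℝ) : ℝ :=
  ∑' k : ℕ, (Real.log (lam + ((k : ℝ) + 1) ^ 2) - Real.log (((k : ℝ) + 1) ^ 2))

variable {lam : ℝ}

lemma term_zero (k : ℕ) (s : ℂ) : term 0 k s = 1 / ((k : ℂ) + 1) ^ s := by
  rw [term, zero_add, ofReal_sq_cpow_half (by positivity), cpow_neg, one_div]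
  push_cast; rfl

lemma norm_term_le (hlam : 0 ≤ lam) (k : ℕ) {s : ℂ} (hs : 0 ≤ s.re) :
    ‖term lam k s‖ ≤ ((k : ℝ) + 1) ^ (-s.re) := by
  have hk : (0 : ℝ) < (k : ℝ) + 1 := by positivity
  calc ‖term lam k s‖ = (lam + ((k : ℝ) + 1) ^ 2) ^ (-s.re / 2) := by
        rw [term, norm_cpow_eq_rpow_re_of_pos (by positivity), neg_div, neg_re, div_ofNat_re,
          neg_div]
    _ ≤ (((k : ℝ) + 1) ^ 2) ^ (-s.re / 2) :=
        Real.rpow_le_rpow_of_nonpos (by positivity) (by linarith) (by linarith)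
    _ = ((k : ℝ) + 1) ^ (-s.re) := by
        rw [← Real.rpow_natCast_mul hk.le]; push_cast; ring_nf

lemma summable_norm_term (hlam : 0 ≤ lam) {s : ℂ} (hs : 1 < s.re) :
    Summable fun k => ‖term lam k s‖ :=
  .of_nonneg_of_le (fun _ => norm_nonneg _) (fun k => norm_term_le hlam k (by linarith))
    (summable_nat_add_one_rpow (by linarith))

lemma tsum_term_zero {s : ℂ} (hs : 1 < s.re) : ∑' k, term 0 k s = riemannZeta s := by
  simp only [term_zero, zeta_eq_tsum_one_div_nat_add_one_cpow hs]

lemma norm_term_sub_term_zero_le (hlam : 0 ≤ lam) (k : ℕ) {a W : ℝ} (ha : -2 ≤ a) {s : ℂ}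
    (has : a ≤ s.re) (hsW : ‖s‖ ≤ W) :
    ‖term lam k s - term 0 k s‖ ≤ W / 2 * lam * ((k : ℝ) + 1) ^ (-(a + 2)) := by
  have hk : (1 : ℝ) ≤ (k : ℝ) + 1 := by simp
  have hre : (-s / 2).re = -s.re / 2 := by simp
  have hmvt := norm_ofReal_cpow_sub_ofReal_cpow_le (a := lam + ((k : ℝ) + 1) ^ 2)
    (b := 0 + ((k : ℝ) + 1) ^ 2) (by positivity) (by linarith) (w := -s / 2) (by linarith)
  have hpow : (0 + ((k : ℝ) + 1) ^ 2) ^ ((-s / 2).re - 1) ≤ ((k : ℝ) + 1) ^ (-(a + 2)) := by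
    rw [zero_add, ← Real.rpow_natCast_mul (by positivity), hre]
    exact Real.rpow_le_rpow_of_exponent_le hk (by push_cast; linarith)
  calc ‖term lam k s - term 0 k s‖
      ≤ ‖-s / 2‖ * (0 + ((k : ℝ) + 1) ^ 2) ^ ((-s / 2).re - 1) * lam := by
        simpa [term] using hmvt
    _ ≤ W / 2 * ((k : ℝ) + 1) ^ (-(a + 2)) * lam := by
        have : ‖-s / 2‖ = ‖s‖ / 2 := by simp
        gcongr
        · linarith [norm_nonneg s]
        · linarith
    _ = W / 2 * lam * ((k : ℝ) + 1) ^ (-(a + 2)) := by ring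

lemma differentiable_term (hlam : 0 ≤ lam) (k : ℕ) : Differentiable ℂ (term lam k) := fun _ =>
  (differentiableAt_id.neg.div_const 2).const_cpow
    (Or.inl (ofReal_ne_zero.mpr (by positivity : 0 < lam + ((k : ℝ) + 1) ^ 2).ne'))

lemma differentiableOn_correction (hlam : 0 ≤ lam) {a : ℝ} (ha : -1 < a) (W : ℝ) :
    DifferentiableOn ℂ (correction lam) ({s | a < s.re} ∩ Metric.ball 0 W) :=
  differentiableOn_tsum_of_summable_norm
    ((summable_nat_add_one_rpow (by linarith)).mul_left (W / 2 * lam))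
    (fun k => ((differentiable_term hlam k).sub (differentiable_term le_rfl k)).differentiableOn)
    (isOpen_re_gt_inter_ball _ _)
    (fun k _ hs => norm_term_sub_term_zero_le hlam k (by linarith) hs.1.le
      (mem_ball_zero_iff.mp hs.2).le)

lemma differentiableAt_correction (hlam : 0 ≤ lam) {s : ℂ} (hs : -1 < s.re) :
    DifferentiableAt ℂ (correction lam) s :=
  (differentiableOn_correction hlam (a := (s.re - 1) / 2) (by linarith) (‖s‖ + 1)).differentiableAt
    ((isOpen_re_gt_inter_ball _ _).mem_nhds
      ⟨show (s.re - 1) / 2 < s.re by linarith, mem_ball_zero_iff.mpr (by linarith)⟩)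

lemma hasDerivAt_term_zero (hlam : 0 ≤ lam) (k : ℕ) :
    HasDerivAt (term lam k) (-(Real.log (lam + ((k : ℝ) + 1) ^ 2) : ℂ) / 2) 0 := by
  have hA : 0 < lam + ((k : ℝ) + 1) ^ 2 := by positivity
  refine (hasDerivAt_cpow_zero (ofReal_ne_zero.mpr hA.ne') ((hasDerivAt_id' 0).neg.div_const 2)
    (by simp)).congr_deriv ?_
  rw [← ofReal_log hA.le]; ring

lemma deriv_correction_zero (hlam : 0 ≤ lam) :
    deriv (correction lam) 0 = -(logSum lam : ℂ) / 2 := by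
  have hsum := hasSum_deriv_of_summable_norm
    ((summable_nat_add_one_rpow (p := -(-1 / 2 + 2)) (by norm_num)).mul_left (1 / 2 * lam))
    (fun k => ((differentiable_term hlam k).sub (differentiable_term le_rfl k)).differentiableOn)
    (isOpen_re_gt_inter_ball _ _)
    (fun k _ hs => norm_term_sub_term_zero_le hlam k (by norm_num) hs.1.le
      (mem_ball_zero_iff.mp hs.2).le)
    (show (0 : ℂ) ∈ {s : ℂ | -1 / 2 < s.re} ∩ Metric.ball 0 1 from ⟨by norm_num, by simp⟩)
  refine hsum.tsum_eq.symm.trans ?_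
  rw [logSum, ofReal_tsum, neg_div, ← tsum_div_const, ← tsum_neg]
  refine tsum_congr fun k => ?_
  rw [((hasDerivAt_term_zero hlam k).sub (hasDerivAt_term_zero le_rfl k)).deriv, zero_add,
    ofReal_sub]
  ring

lemma continuation_eq_tsum (hlam : 0 ≤ lam) {s : ℂ} (hs : 1 < s.re) :
    continuation lam s = ((1 + √lam : ℝ) : ℂ) ^ (-s) + 2 * ∑' k, term lam k s := by
  have hcorr : correction lam s = ∑' k, term lam k s - riemannZeta s := by
    rw [correction, (summable_norm_term hlam hs).of_norm.tsum_sub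
      (summable_norm_term le_rfl hs).of_norm, tsum_term_zero hs]
  rw [continuation, hcorr]
  ring

lemma differentiableOn_continuation (hlam : 0 ≤ lam) :
    DifferentiableOn ℂ (continuation lam) ({s : ℂ | -1 < s.re} \ {1}) := fun s ⟨hs, hs1⟩ =>
  ((((differentiableAt_id.neg.const_cpow (Or.inl (ofReal_ne_zero.mpr
    (by positivity : 0 < 1 + √lam).ne')))).add
      ((differentiableAt_riemannZeta hs1).const_mul 2)).add
      ((differentiableAt_correction hlam hs).const_mul 2)).differentiableWithinAt

lemma deriv_continuation_zero (hlam : 0 ≤ lam) :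
    deriv (continuation lam) 0 =
      -((Real.log (1 + √lam) + logSum lam : ℝ) : ℂ) + 2 * deriv riemannZeta 0 := by
  have hc : 0 < 1 + √lam := by positivity
  have hcpow := hasDerivAt_cpow_zero (ofReal_ne_zero.mpr hc.ne') (hasDerivAt_neg' 0) neg_zero
  have hzeta := (differentiableAt_riemannZeta zero_ne_one).hasDerivAt
  have hcorr := (differentiableAt_correction hlam (by simp : -1 < (0 : ℂ).re)).hasDerivAt
  have hF : HasDerivAt (continuation lam) _ 0 :=
    (hcpow.add (hzeta.const_mul 2)).add (hcorr.const_mul 2)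
  rw [hF.deriv, deriv_correction_zero hlam, ← ofReal_log hc.le]
  push_cast
  ring

lemma summable_one_div_nat_add_one_sq : Summable fun k : ℕ => 1 / ((k : ℝ) + 1) ^ 2 := by
  refine (summable_nat_add_one_rpow (p := -2) (by norm_num)).congr fun k => ?_
  rw [Real.rpow_neg (by positivity), Real.rpow_two, one_div]

lemma summable_log_sub_log (hlam : 0 ≤ lam) :
    Summable fun k : ℕ => Real.log (lam + ((k : ℝ) + 1) ^ 2) - Real.log (((k : ℝ) + 1) ^ 2) := by
  refine .of_nonneg_of_le (fun k => sub_nonneg.mpr (Real.log_le_log (by positivity) (by linarith)))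
    (fun k => ?_) (summable_one_div_nat_add_one_sq.mul_left lam)
  have hB : 0 < ((k : ℝ) + 1) ^ 2 := by positivity
  calc Real.log (lam + ((k : ℝ) + 1) ^ 2) - Real.log (((k : ℝ) + 1) ^ 2)
      = Real.log ((lam + ((k : ℝ) + 1) ^ 2) / ((k : ℝ) + 1) ^ 2) :=
        (Real.log_div (by positivity) hB.ne').symm
    _ ≤ (lam + ((k : ℝ) + 1) ^ 2) / ((k : ℝ) + 1) ^ 2 - 1 :=
        Real.log_le_sub_one_of_pos (by positivity)
    _ = lam * (1 / ((k : ℝ) + 1) ^ 2) := by field_simp; ring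

lemma hasDerivAt_logSum (hlam : 0 < lam) :
    HasDerivAt logSum (∑' k : ℕ, 1 / (lam + ((k : ℝ) + 1) ^ 2)) lam := by
  refine hasDerivAt_tsum_of_isPreconnected (t := Ioi 0)
    (g := fun (k : ℕ) y => Real.log (y + ((k : ℝ) + 1) ^ 2) - Real.log (((k : ℝ) + 1) ^ 2))
    (g' := fun (k : ℕ) y => 1 / (y + ((k : ℝ) + 1) ^ 2))
    summable_one_div_nat_add_one_sq isOpen_Ioi isPreconnected_Ioi (fun k y (hy : 0 < y) => ?_)
    (fun k y (hy : 0 < y) => ?_) hlam (summable_log_sub_log hlam.le) hlam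
  · have hA : 0 < y + ((k : ℝ) + 1) ^ 2 := by positivity
    simpa using (((hasDerivAt_id' y).add_const (((k : ℝ) + 1) ^ 2)).log hA.ne').sub_const
      (Real.log (((k : ℝ) + 1) ^ 2))
  · rw [Real.norm_of_nonneg (by positivity)]
    gcongr
    linarith

lemma hasDerivAt_log_one_add_sqrt {x : ℝ} (hx : 0 < x) :
    HasDerivAt (fun y => Real.log (1 + √y)) (1 / (2 * √x * (1 + √x))) x := by
  have hsqrt : 0 < √x := Real.sqrt_pos.mpr hx
  convert ((Real.hasDerivAt_sqrt hx.ne').const_add 1).log (by positivity) using 1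
  field_simp

end DNZeta

/-- The spectral zeta function `ζ_λ(s) = (1+√λ)^{−s} + 2 Σ_{k≥1} (λ+k²)^{−s/2}` of the
Dirichlet-to-Neumann operator `𝐃_𝔸(λ) + Π₀` converges absolutely for `Re s > 1`,
extends holomorphically past `0`, and `G(λ) = −F_λ′(0)` satisfies
`G′(λ) = 1/(2√λ(1+√λ)) + Σ_{k≥1} 1/(λ+k²)`. -/
theorem DN_zeta_determinant_derivative :
    (∀ lam : ℝ, 0 < lam → ∀ s : ℂ, 1 < s.re →
      Summable (fun k : ℕ => ‖((lam + ((k : ℝ) + 1) ^ 2 : ℝ) : ℂ) ^ (-s / 2)‖)) ∧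
    ∃ F : ℝ → ℂ → ℂ,
      (∀ lam : ℝ, 0 < lam → ∃ ε : ℝ, 0 < ε ∧
        DifferentiableOn ℂ (F lam) ({s : ℂ | -ε < s.re} \ {1}) ∧
        ∀ s : ℂ, 1 < s.re →
          F lam s = ((1 + Real.sqrt lam : ℝ) : ℂ) ^ (-s) +
            2 * ∑' k : ℕ, ((lam + ((k : ℝ) + 1) ^ 2 : ℝ) : ℂ) ^ (-s / 2)) ∧
      ∀ lam : ℝ, 0 < lam →
        HasDerivAt (fun m : ℝ => -(deriv (F m) 0))
          (((1 / (2 * Real.sqrt lam * (1 + Real.sqrt lam)) +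
            ∑' k : ℕ, 1 / (lam + ((k : ℝ) + 1) ^ 2) : ℝ)) : ℂ) lam := by
  open DNZeta in
  refine ⟨fun lam hlam s hs => summable_norm_term hlam.le hs, continuation,
    fun lam hlam => ⟨1, one_pos, by simpa using differentiableOn_continuation hlam.le,
      fun s hs => continuation_eq_tsum hlam.le hs⟩, fun lam hlam => ?_⟩
  have hG : HasDerivAt (fun m : ℝ => (((Real.log (1 + √m) + logSum m : ℝ)) : ℂ) -
      2 * deriv riemannZeta 0) _ lam :=
    (((hasDerivAt_log_one_add_sqrt hlam).add (hasDerivAt_logSum hlam)).ofReal_comp).sub_const _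
  refine hG.congr_of_eventuallyEq ?_
  filter_upwards [eventually_gt_nhds hlam] with m hm
  rw [deriv_continuation_zero hm.le]
  ring
end
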